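/- arXiv:math/0702785 — 8 statements merged into one kernel-verified Lean document; each statement's English description precedes it below -/
import Mathlib

section
/- As t → ∞, the matrix α_t = m_t⁻¹ converges (entrywise) to a matrix α_∞ all of whose entries are finite. Moreover, for each index j, the map t ↦ (α_t)_{j,j} is nonincreasing on (0,∞). -/
open MeasureTheory Filter Topology Matrix

/-- Key inequality: for a symmetric positive-semidefinite invertible real matrix `A`,
`2⟨x,y⟩ - ⟨y, A y⟩ ≤ ⟨x, A⁻¹ x⟩`. -/
lemma quad_key {n : ℕ} {A : Matrix (Fin n) (Fin n) ℝ} (hsym : Aᵀ = A)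
    (hpsd : ∀ z : Fin n → ℝ, 0 ≤ z ⬝ᵥ (A *ᵥ z)) (hu : IsUnit A) (x y : Fin n → ℝ) :
    2 * (x ⬝ᵥ y) - y ⬝ᵥ (A *ᵥ y) ≤ x ⬝ᵥ (A⁻¹ *ᵥ x) := by
  have hdet : IsUnit A.det := (Matrix.isUnit_iff_isUnit_det A).mp hu
  have hAAinv : A * A⁻¹ = 1 := Matrix.mul_nonsing_inv A hdet
  set w : Fin n → ℝ := A⁻¹ *ᵥ x with hw
  have hAw : A *ᵥ w = x := by
    rw [hw, Matrix.mulVec_mulVec, hAAinv, Matrix.one_mulVec]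
  have h0 : 0 ≤ (y - w) ⬝ᵥ (A *ᵥ (y - w)) := hpsd _
  have hexp : (y - w) ⬝ᵥ (A *ᵥ (y - w))
      = y ⬝ᵥ (A *ᵥ y) - y ⬝ᵥ x - w ⬝ᵥ (A *ᵥ y) + w ⬝ᵥ x := by
    rw [Matrix.mulVec_sub, sub_dotProduct, dotProduct_sub, dotProduct_sub, hAw]
    ring
  have hwAy : w ⬝ᵥ (A *ᵥ y) = x ⬝ᵥ y := by
    rw [Matrix.dotProduct_mulVec, ← hsym, Matrix.vecMul_transpose, hAw]
  have hwx : w ⬝ᵥ x = x ⬝ᵥ (A⁻¹ *ᵥ x) := by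
    rw [hw, dotProduct_comm]
  have hyx : y ⬝ᵥ x = x ⬝ᵥ y := dotProduct_comm _ _
  rw [hexp, hwAy, hwx, hyx] at h0
  linarith

/-- If `A ≤ B` in the quadratic-form sense, with `A` symmetric PSD and both invertible,
then the quadratic form of `B⁻¹` is at most that of `A⁻¹`. -/
lemma inv_quad_anti {n : ℕ} {A B : Matrix (Fin n) (Fin n) ℝ} (hsym : Aᵀ = A)
    (hpsd : ∀ z : Fin n → ℝ, 0 ≤ z ⬝ᵥ (A *ᵥ z)) (hAu : IsUnit A) (hBu : IsUnit B)
    (hle : ∀ z : Fin n → ℝ, z ⬝ᵥ (A *ᵥ z) ≤ z ⬝ᵥ (B *ᵥ z)) (x : Fin n → ℝ) :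
    x ⬝ᵥ (B⁻¹ *ᵥ x) ≤ x ⬝ᵥ (A⁻¹ *ᵥ x) := by
  set y : Fin n → ℝ := B⁻¹ *ᵥ x with hy
  have hdetB : IsUnit B.det := (Matrix.isUnit_iff_isUnit_det B).mp hBu
  have hBy : B *ᵥ y = x := by
    rw [hy, Matrix.mulVec_mulVec, Matrix.mul_nonsing_inv B hdetB, Matrix.one_mulVec]
  have h1 : x ⬝ᵥ (B⁻¹ *ᵥ x) = 2 * (x ⬝ᵥ y) - y ⬝ᵥ (B *ᵥ y) := by
    rw [hBy, dotProduct_comm y x, ← hy]; ring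
  have h2 := quad_key hsym hpsd hAu x y
  have h3 := hle y
  linarith

/-- The quadratic form of the inverse of a PSD invertible matrix is nonnegative. -/
lemma inv_quad_nonneg {n : ℕ} {A : Matrix (Fin n) (Fin n) ℝ}
    (hpsd : ∀ z : Fin n → ℝ, 0 ≤ z ⬝ᵥ (A *ᵥ z)) (hu : IsUnit A) (x : Fin n → ℝ) :
    0 ≤ x ⬝ᵥ (A⁻¹ *ᵥ x) := by
  have hdet : IsUnit A.det := (Matrix.isUnit_iff_isUnit_det A).mp hu
  have hAw : A *ᵥ (A⁻¹ *ᵥ x) = x := by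
    rw [Matrix.mulVec_mulVec, Matrix.mul_nonsing_inv A hdet, Matrix.one_mulVec]
  have := hpsd (A⁻¹ *ᵥ x)
  rwa [hAw, dotProduct_comm] at this

lemma single_quad {n : ℕ} (M : Matrix (Fin n) (Fin n) ℝ) (i j : Fin n) :
    (Pi.single i 1 : Fin n → ℝ) ⬝ᵥ (M *ᵥ Pi.single j 1) = M i j := by
  simp [Matrix.mulVec_single, single_dotProduct]

lemma quad_basis_expand {n : ℕ} (M : Matrix (Fin n) (Fin n) ℝ) (hM : Mᵀ = M) (i j : Fin n) :
    ((Pi.single i 1 + Pi.single j 1 : Fin n → ℝ) ⬝ᵥ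
        (M *ᵥ (Pi.single i 1 + Pi.single j 1))
      - (Pi.single i 1 : Fin n → ℝ) ⬝ᵥ (M *ᵥ Pi.single i 1)
      - (Pi.single j 1 : Fin n → ℝ) ⬝ᵥ (M *ᵥ Pi.single j 1)) / 2 = M i j := by
  have hji : M j i = M i j := by conv_lhs => rw [← hM, Matrix.transpose_apply]
  rw [Matrix.mulVec_add, add_dotProduct, dotProduct_add, dotProduct_add,
    single_quad, single_quad, single_quad, single_quad, hji]
  ring

/-- As t → ∞, the matrix α_t = m_t⁻¹ converges (entrywise) to a matrix α_∞ all of whose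
entries are finite. Moreover, for each index j, the map t ↦ (α_t)_{j,j} is nonincreasing
on (0,∞). -/
theorem alpha_converges_and_diagonal_antitone
    (n : ℕ) (hn : 1 ≤ n)
    (f : ℝ → Fin n → ℝ)
    (hf_meas : ∀ i, Measurable fun s => f s i)
    (hf_loc : ∀ i, ∀ t > (0 : ℝ), IntegrableOn (fun s => (f s i) ^ 2) (Set.Ioc 0 t))
    (m : ℝ → Matrix (Fin n) (Fin n) ℝ)
    (hm : ∀ t, m t = Matrix.of fun i j => ∫ s in Set.Ioc 0 t, f s i * f s j)
    (hm_inv : ∀ t > (0 : ℝ), IsUnit (m t))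
    (α : ℝ → Matrix (Fin n) (Fin n) ℝ)
    (hα : ∀ t, α t = (m t)⁻¹) :
    (∃ A : Matrix (Fin n) (Fin n) ℝ,
      ∀ i j, Tendsto (fun t => α t i j) atTop (𝓝 (A i j))) ∧
    (∀ j, AntitoneOn (fun t => α t j j) (Set.Ioi 0)) := by
  -- integrability of pairwise products
  have hint : ∀ (i j : Fin n) (t : ℝ), 0 < t →
      IntegrableOn (fun s => f s i * f s j) (Set.Ioc 0 t) := by
    intro i j t ht
    refine Integrable.mono' ((hf_loc i t ht).add (hf_loc j t ht))
      (((hf_meas i).mul (hf_meas j)).aestronglyMeasurable) ?_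
    filter_upwards with s
    simp only [Real.norm_eq_abs, abs_mul, Pi.add_apply]
    nlinarith [sq_abs (f s i), sq_abs (f s j), sq_nonneg (|f s i| - |f s j|),
      abs_nonneg (f s i), abs_nonneg (f s j)]
  -- integrability of (x · f)²
  have hgint : ∀ (x : Fin n → ℝ) (t : ℝ), 0 < t →
      IntegrableOn (fun s => (∑ i, x i * f s i) ^ 2) (Set.Ioc 0 t) := by
    intro x t ht
    have hexp : (fun s => (∑ i, x i * f s i) ^ 2)
        = fun s => ∑ i, ∑ j, (x i * x j) * (f s i * f s j) := by
      funext s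
      rw [sq, Finset.sum_mul_sum]
      exact Finset.sum_congr rfl fun i _ => Finset.sum_congr rfl fun j _ => by ring
    rw [hexp]
    exact integrable_finset_sum _ fun i _ =>
      integrable_finset_sum _ fun j _ => (hint i j t ht).const_mul _
  -- the quadratic form of m t is an integral
  have hquad : ∀ (x : Fin n → ℝ) (t : ℝ), 0 < t →
      x ⬝ᵥ (m t *ᵥ x) = ∫ s in Set.Ioc 0 t, (∑ i, x i * f s i) ^ 2 := by
    intro x t ht
    have h1 : x ⬝ᵥ (m t *ᵥ x) = ∑ i, ∑ j, (x i * x j) * (m t i j) := by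
      simp only [dotProduct, Matrix.mulVec, Finset.mul_sum]
      exact Finset.sum_congr rfl fun i _ => Finset.sum_congr rfl fun j _ => by ring
    have h2 : ∫ s in Set.Ioc 0 t, (∑ i, x i * f s i) ^ 2
        = ∑ i, ∑ j, ∫ s in Set.Ioc 0 t, (x i * x j) * (f s i * f s j) := by
      have hexp : (fun s => (∑ i, x i * f s i) ^ 2)
          = fun s => ∑ i, ∑ j, (x i * x j) * (f s i * f s j) := by
        funext s
        rw [sq, Finset.sum_mul_sum]
        exact Finset.sum_congr rfl fun i _ => Finset.sum_congr rfl fun j _ => by ring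
      rw [hexp, MeasureTheory.integral_finset_sum _ fun i _ =>
        integrable_finset_sum _ fun j _ => (hint i j t ht).const_mul _]
      exact Finset.sum_congr rfl fun i _ =>
        MeasureTheory.integral_finset_sum _ fun j _ => (hint i j t ht).const_mul _
    rw [h1, h2]
    refine Finset.sum_congr rfl fun i _ => Finset.sum_congr rfl fun j _ => ?_
    rw [MeasureTheory.integral_const_mul, hm]
    rfl
  -- m t is PSD for t > 0
  have hpsd : ∀ (t : ℝ), 0 < t → ∀ z : Fin n → ℝ, 0 ≤ z ⬝ᵥ (m t *ᵥ z) := by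
    intro t ht z
    rw [hquad z t ht]
    exact setIntegral_nonneg measurableSet_Ioc fun s _ => sq_nonneg _
  -- m is monotone in the quadratic form sense
  have hmono : ∀ (s t : ℝ), 0 < s → s ≤ t → ∀ z : Fin n → ℝ,
      z ⬝ᵥ (m s *ᵥ z) ≤ z ⬝ᵥ (m t *ᵥ z) := by
    intro s t hs hst z
    have ht : 0 < t := hs.trans_le hst
    rw [hquad z s hs, hquad z t ht]
    exact setIntegral_mono_set (hgint z t ht)
      (Filter.Eventually.of_forall fun s => sq_nonneg _)
      (HasSubset.Subset.eventuallyLE (Set.Ioc_subset_Ioc_right hst))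
  -- m t is symmetric
  have hsymm : ∀ (t : ℝ), (m t)ᵀ = m t := by
    intro t
    ext i j
    rw [Matrix.transpose_apply, hm]
    simp only [Matrix.of_apply]
    have : (fun s => f s j * f s i) = fun s => f s i * f s j := by
      funext s; ring
    rw [this]
  -- the quadratic form of α t, antitone in t on (0,∞)
  have hQanti : ∀ (x : Fin n → ℝ) (s t : ℝ), 0 < s → s ≤ t →
      x ⬝ᵥ (α t *ᵥ x) ≤ x ⬝ᵥ (α s *ᵥ x) := by
    intro x s t hs hst
    have ht : 0 < t := hs.trans_le hst
    rw [hα s, hα t]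
    exact inv_quad_anti (hsymm s) (hpsd s hs) (hm_inv s hs) (hm_inv t ht)
      (hmono s t hs hst) x
  have hQnonneg : ∀ (x : Fin n → ℝ) (t : ℝ), 0 < t → 0 ≤ x ⬝ᵥ (α t *ᵥ x) := by
    intro x t ht
    rw [hα t]
    exact inv_quad_nonneg (hpsd t ht) (hm_inv t ht) x
  -- convergence of the quadratic form for every x
  have hconv : ∀ x : Fin n → ℝ, ∃ l : ℝ,
      Tendsto (fun t => x ⬝ᵥ (α t *ᵥ x)) atTop (𝓝 l) := by
    intro x
    set φ : ℝ → ℝ := fun t => x ⬝ᵥ (α (max t 1) *ᵥ x) with hφ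
    have hφanti : Antitone φ := by
      intro a b hab
      exact hQanti x (max a 1) (max b 1) (lt_max_of_lt_right one_pos)
        (max_le_max hab le_rfl)
    have hφbdd : BddBelow (Set.range φ) := by
      refine ⟨0, ?_⟩
      rintro y ⟨t, rfl⟩
      exact hQnonneg x (max t 1) (lt_max_of_lt_right one_pos)
    refine ⟨⨅ t, φ t, Tendsto.congr' ?_ (tendsto_atTop_ciInf hφanti hφbdd)⟩
    filter_upwards [eventually_ge_atTop (1 : ℝ)] with t ht
    simp only [hφ, max_eq_left ht]
  choose L hL using hconv
  -- α t is symmetric for t > 0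
  have hαsymm : ∀ (t : ℝ), 0 < t → (α t)ᵀ = α t := by
    intro t ht
    rw [hα t, Matrix.transpose_nonsing_inv, hsymm t]
  constructor
  · -- convergence of entries
    refine ⟨Matrix.of fun i j =>
      (L (Pi.single i 1 + Pi.single j 1) - L (Pi.single i 1) - L (Pi.single j 1)) / 2,
      fun i j => ?_⟩
    have htend : Tendsto (fun t =>
        ((Pi.single i 1 + Pi.single j 1 : Fin n → ℝ) ⬝ᵥ
            (α t *ᵥ (Pi.single i 1 + Pi.single j 1))
          - (Pi.single i 1 : Fin n → ℝ) ⬝ᵥ (α t *ᵥ Pi.single i 1)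
          - (Pi.single j 1 : Fin n → ℝ) ⬝ᵥ (α t *ᵥ Pi.single j 1)) / 2) atTop
        (𝓝 ((L (Pi.single i 1 + Pi.single j 1) - L (Pi.single i 1)
            - L (Pi.single j 1)) / 2)) :=
      (((hL _).sub (hL _)).sub (hL _)).div_const 2
    refine Tendsto.congr' ?_ htend
    filter_upwards [eventually_gt_atTop (0 : ℝ)] with t ht
    exact quad_basis_expand (α t) (hαsymm t ht) i j
  · -- diagonal entries are antitone on (0,∞)
    intro j s hs t ht hst
    have h := hQanti (Pi.single j 1) s t hs hst
    rwa [single_quad, single_quad] at h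
end

section
/- For every t > 0, the entrywise improper integral ∫_t^∞ φ(u)·φ(u)ᵀ du converges, and α_t = ∫_t^∞ φ(u)·φ(u)ᵀ du + α_∞, where α_∞ = lim_{s→∞} α_s. -/
/-!
The entries of `f fᵀ` are integrable on `(0, t]` (Cauchy–Schwarz), so the Gramian `m` is
absolutely continuous with `m' = f fᵀ` almost everywhere (Lebesgue differentiation). The resolvent identity
`α_x - α_y = α_x (m_y - m_x) α_y` shows both that `α = m⁻¹` is absolutely continuous (its
increments are dominated by those of `m`) and that `α' = -α m' α = -φ φᵀ` wherever `m'` exists,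
using that `α` is symmetric. The fundamental theorem of calculus for absolutely continuous
functions then gives `α_t - α_s = ∫_t^s φ φᵀ`. As `s → ∞` the diagonal integrals converge to
`α_t - α_∞`; since `|φ_i φ_j| ≤ φ_i² + φ_j²`, this makes every entry integrable on `(t, ∞)`.
-/

open MeasureTheory Filter Topology Matrix Set
open scoped Interval

theorem AbsolutelyContinuousOnInterval.congr {X : Type*} [PseudoMetricSpace X] {f g : ℝ → X}
    {a b : ℝ} (hf : AbsolutelyContinuousOnInterval f a b) (hfg : EqOn f g (uIcc a b)) :
    AbsolutelyContinuousOnInterval g a b := by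
  refine hf.congr' ?_
  rw [EventuallyEq, eventually_inf_principal]
  filter_upwards with ⟨n, I⟩ hnI
  exact Finset.sum_congr rfl fun i hi => by rw [hfg (hnI.1 i hi).1, hfg (hnI.1 i hi).2]

theorem AbsolutelyContinuousOnInterval.of_dist_le_mul_sum {ι X Y : Type*} [Fintype ι]
    [PseudoMetricSpace X] [PseudoMetricSpace Y] {g : ℝ → X} {f : ι → ℝ → Y} {a b : ℝ} (K : ℝ)
    (hf : ∀ k, AbsolutelyContinuousOnInterval (f k) a b)
    (hg : ∀ x ∈ uIcc a b, ∀ y ∈ uIcc a b, dist (g x) (g y) ≤ K * ∑ k, dist (f k x) (f k y)) :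
    AbsolutelyContinuousOnInterval g a b := by
  have hsum := (tendsto_finsetSum Finset.univ fun k _ => hf k).const_mul K
  simp only [Finset.sum_const_zero, mul_zero] at hsum
  refine squeeze_zero' (.of_forall fun _ => Finset.sum_nonneg fun _ _ => dist_nonneg) ?_ hsum
  rw [eventually_inf_principal]
  filter_upwards with ⟨n, I⟩ hnI
  calc ∑ i ∈ Finset.range n, dist (g (I i).1) (g (I i).2)
      ≤ ∑ i ∈ Finset.range n, K * ∑ k, dist (f k (I i).1) (f k (I i).2) :=
        Finset.sum_le_sum fun i hi => hg _ (hnI.1 i hi).1 _ (hnI.1 i hi).2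
    _ = K * ∑ k, ∑ i ∈ Finset.range n, dist (f k (I i).1) (f k (I i).2) := by
        rw [← Finset.mul_sum, Finset.sum_comm]

namespace Matrix

variable {ι : Type*} [Fintype ι]

theorem IsSymm.mul_vecMulVec_self_mul {α : Type*} [CommSemiring α] {A : Matrix ι ι α}
    (hA : A.IsSymm) (v : ι → α) : A * vecMulVec v v * A = vecMulVec (A *ᵥ v) (A *ᵥ v) := by
  rw [mul_vecMulVec, vecMulVec_mul, ← mulVec_transpose, hA.eq]

theorem mul_mul_apply_eq_sum {α : Type*} [NonUnitalNonAssocSemiring α]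
    (P Q R : Matrix ι ι α) (i j : ι) : (P * Q * R) i j = ∑ k, ∑ l, P i k * Q k l * R l j := by
  simp only [mul_apply, Finset.sum_mul]
  exact Finset.sum_comm

theorem abs_mul_mul_apply_le {P Q R : Matrix ι ι ℝ} {C : ℝ} (hP : ∀ k l, |P k l| ≤ C)
    (hR : ∀ k l, |R k l| ≤ C) (i j : ι) :
    |(P * Q * R) i j| ≤ C * C * ∑ p : ι × ι, |Q p.1 p.2| := by
  rw [mul_mul_apply_eq_sum, Fintype.sum_prod_type, Finset.mul_sum]
  refine (Finset.abs_sum_le_sum_abs _ _).trans (Finset.sum_le_sum fun k _ => ?_)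
  rw [Finset.mul_sum]
  refine (Finset.abs_sum_le_sum_abs _ _).trans (Finset.sum_le_sum fun l _ => ?_)
  have hC : 0 ≤ C := (abs_nonneg _).trans (hP k l)
  rw [abs_mul, abs_mul]
  calc |P i k| * |Q k l| * |R l j| ≤ C * |Q k l| * C := by gcongr; exacts [hP i k, hR l j]
    _ = C * C * |Q k l| := by ring

variable [DecidableEq ι]

theorem continuousAt_inv_of_isUnit_det {K : Type*} [Field K] [TopologicalSpace K]
    [IsTopologicalDivisionRing K] {A : Matrix ι ι K} (hA : IsUnit A.det) :
    ContinuousAt Inv.inv A := by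
  refine continuousAt_matrix_inv _ ?_
  rw [Ring.inverse_eq_inv']
  exact continuousAt_inv₀ hA.ne_zero

theorem hasDerivAt_inv_apply {M : ℝ → Matrix ι ι ℝ} {G : Matrix ι ι ℝ} {x : ℝ}
    (hM : ∀ k l, HasDerivAt (fun y => M y k l) (G k l) x) (hdet : IsUnit (M x).det) (i j : ι) :
    HasDerivAt (fun y => (M y)⁻¹ i j) (-((M x)⁻¹ * G * (M x)⁻¹) i j) x := by
  have hcont : ContinuousAt M x :=
    continuousAt_pi.2 fun k => continuousAt_pi.2 fun l => (hM k l).continuousAt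
  have hinv : Tendsto (fun y => (M y)⁻¹) (𝓝[≠] x) (𝓝 (M x)⁻¹) :=
    ((continuousAt_inv_of_isUnit_det hdet).comp hcont).tendsto.mono_left nhdsWithin_le_nhds
  have hunit : ∀ᶠ y in 𝓝[≠] x, IsUnit (M y).det := by
    refine nhdsWithin_le_nhds ?_
    have := (continuous_id.matrix_det.continuousAt.comp hcont).eventually_ne hdet.ne_zero
    filter_upwards [this] with y hy using isUnit_iff_ne_zero.2 hy
  have hslope : ∀ᶠ y in 𝓝[≠] x, slope (fun y => (M y)⁻¹ i j) x y
      = -∑ k, ∑ l, (M y)⁻¹ i k * slope (fun y => M y k l) x y * (M x)⁻¹ l j := by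
    filter_upwards [hunit] with y hy
    have hres := inv_sub_inv (A := M y) (B := M x) <| by
      rw [isUnit_iff_isUnit_det, isUnit_iff_isUnit_det]; exact iff_of_true hy hdet
    have := congrFun (congrFun hres i) j
    simp only [slope_def_field, sub_apply] at this ⊢
    rw [this, mul_mul_apply_eq_sum]
    simp only [sub_apply, ← Finset.sum_neg_distrib, Finset.sum_div]
    refine Finset.sum_congr rfl fun k _ => Finset.sum_congr rfl fun l _ => ?_
    ring
  rw [hasDerivAt_iff_tendsto_slope, mul_mul_apply_eq_sum, tendsto_congr' hslope]
  refine .neg (tendsto_finsetSum _ fun k _ => tendsto_finsetSum _ fun l _ => ?_)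
  exact ((tendsto_pi_nhds.1 (tendsto_pi_nhds.1 hinv i) k).mul
    (hasDerivAt_iff_tendsto_slope.1 (hM k l))).mul_const _

theorem absolutelyContinuousOnInterval_inv_apply {M : ℝ → Matrix ι ι ℝ} {a b : ℝ}
    (hM : ∀ k l, AbsolutelyContinuousOnInterval (fun x => M x k l) a b)
    (hdet : ∀ x ∈ uIcc a b, IsUnit (M x).det) (i j : ι) :
    AbsolutelyContinuousOnInterval (fun x => (M x)⁻¹ i j) a b := by
  have hcont : ContinuousOn M (uIcc a b) :=
    continuousOn_pi.2 fun k => continuousOn_pi.2 fun l => (hM k l).continuousOn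
  have hinv : ContinuousOn (fun x => (M x)⁻¹) (uIcc a b) := fun x hx =>
    (continuousAt_inv_of_isUnit_det (hdet x hx)).comp_continuousWithinAt (hcont x hx)
  obtain ⟨C, hC⟩ : ∃ C, ∀ x ∈ uIcc a b, ∀ k l, |(M x)⁻¹ k l| ≤ C := by
    let := Matrix.normedAddCommGroup (n := ι) (m := ι) (α := ℝ)
    obtain ⟨C, hC⟩ := isCompact_uIcc.exists_bound_of_continuousOn hinv
    exact ⟨C, fun x hx k l => (norm_entry_le_entrywise_sup_norm _).trans (hC x hx)⟩
  refine .of_dist_le_mul_sum (f := fun (p : ι × ι) x => M x p.1 p.2) (C * C)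
    (fun p => hM p.1 p.2) fun x hx y hy => ?_
  have hres := inv_sub_inv (A := M x) (B := M y) <| by
    rw [isUnit_iff_isUnit_det, isUnit_iff_isUnit_det]; exact iff_of_true (hdet x hx) (hdet y hy)
  have := abs_mul_mul_apply_le (Q := M y - M x) (hC x hx) (hC y hy) i j
  rw [← hres] at this
  simpa only [Real.dist_eq, sub_apply, abs_sub_comm (M y _ _)] using this

theorem inv_sub_inv_eq_intervalIntegral {M G : ℝ → Matrix ι ι ℝ} {a b : ℝ} (hab : a ≤ b)
    (hM : ∀ k l, AbsolutelyContinuousOnInterval (fun x => M x k l) a b)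
    (hMG : ∀ᵐ x, x ∈ Ioo a b → ∀ k l, HasDerivAt (fun y => M y k l) (G x k l) x)
    (hdet : ∀ x ∈ Icc a b, IsUnit (M x).det) (i j : ι) :
    IntervalIntegrable (fun x => ((M x)⁻¹ * G x * (M x)⁻¹) i j) volume a b ∧
      (M a)⁻¹ i j - (M b)⁻¹ i j = ∫ x in a..b, ((M x)⁻¹ * G x * (M x)⁻¹) i j := by
  have hAC := absolutelyContinuousOnInterval_inv_apply hM (by rwa [uIcc_of_le hab]) i j
  have hderiv : deriv (fun x => (M x)⁻¹ i j) =ᵐ[volume.restrict (Ι a b)]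
      fun x => -((M x)⁻¹ * G x * (M x)⁻¹) i j := by
    rw [uIoc_of_le hab, ← restrict_Ioo_eq_restrict_Ioc]
    filter_upwards [ae_restrict_mem measurableSet_Ioo, ae_restrict_of_ae hMG] with x hx hMx
    exact (hasDerivAt_inv_apply (hMx hx) (hdet x (Ioo_subset_Icc_self hx)) i j).deriv
  have hint := (hAC.intervalIntegrable_deriv.congr_ae hderiv).neg
  refine ⟨by simpa only [Pi.neg_def, neg_neg] using hint, ?_⟩
  rw [← neg_sub, ← hAC.integral_deriv_eq_sub, intervalIntegral.integral_congr_ae_restrict hderiv,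
    intervalIntegral.integral_neg, neg_neg]

end Matrix

theorem MeasureTheory.Integrable.mul_of_integrable_sq {α : Type*} [MeasurableSpace α]
    {μ : Measure α} {u v : α → ℝ} (hu : AEStronglyMeasurable u μ) (hv : AEStronglyMeasurable v μ)
    (hu2 : Integrable (fun x => u x ^ 2) μ) (hv2 : Integrable (fun x => v x ^ 2) μ) :
    Integrable (fun x => u x * v x) μ :=
  ((memLp_two_iff_integrable_sq hu).2 hu2).integrable_mul ((memLp_two_iff_integrable_sq hv).2 hv2)

theorem integrableOn_Ioi_mul_of_tendsto {u v : ℝ → ℝ} {t Lu Lv : ℝ}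
    (huu : ∀ s, t ≤ s → IntervalIntegrable (fun x => u x * u x) volume t s)
    (hvv : ∀ s, t ≤ s → IntervalIntegrable (fun x => v x * v x) volume t s)
    (huv : ∀ s, t ≤ s → IntervalIntegrable (fun x => u x * v x) volume t s)
    (hu : Tendsto (fun s => ∫ x in t..s, u x * u x) atTop (𝓝 Lu))
    (hv : Tendsto (fun s => ∫ x in t..s, v x * v x) atTop (𝓝 Lv)) :
    IntegrableOn (fun x => u x * v x) (Ioi t) := by
  refine integrableOn_Ioi_of_intervalIntegral_norm_bounded (Lu + Lv + 1) t (fun s => ?_)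
    tendsto_id ?_
  · rcases le_total t s with hts | hst
    · exact (huv s hts).1
    · rw [id_eq, Ioc_eq_empty_of_le hst]
      exact integrableOn_empty
  have hbound := (hu.add hv).eventually (eventually_lt_nhds (lt_add_one (Lu + Lv)))
  filter_upwards [hbound, eventually_ge_atTop t] with s hs hts
  calc ∫ x in t..s, ‖u x * v x‖ ≤ ∫ x in t..s, (u x * u x + v x * v x) := by
        refine intervalIntegral.integral_mono_on hts (huv s hts).norm
          ((huu s hts).add (hvv s hts)) fun x _ => ?_
        rw [Real.norm_eq_abs]
        exact abs_le.2 ⟨by nlinarith [sq_nonneg (u x + v x)], by nlinarith [sq_nonneg (u x - v x)]⟩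
    _ ≤ Lu + Lv + 1 := by
        rw [intervalIntegral.integral_add (huu s hts) (hvv s hts)]
        exact hs.le

section Gram

variable {ι : Type*} {f : ℝ → ι → ℝ} {m : ℝ → Matrix ι ι ℝ}

theorem intervalIntegrable_mul_of_integrableOn_sq
    (hf_meas : ∀ i, Measurable fun s => f s i)
    (hf_loc : ∀ i, ∀ t > (0 : ℝ), IntegrableOn (fun s => (f s i) ^ 2) (Ioc 0 t))
    {s : ℝ} (hs : 0 < s) (k l : ι) :
    IntervalIntegrable (fun u => f u k * f u l) volume 0 s :=
  (intervalIntegrable_iff_integrableOn_Ioc_of_le hs.le).2 <|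
    .mul_of_integrable_sq (hf_meas k).aestronglyMeasurable (hf_meas l).aestronglyMeasurable
      (hf_loc k s hs) (hf_loc l s hs)

theorem gram_apply_eq_intervalIntegral
    (hm : ∀ t, m t = Matrix.of fun i j => ∫ s in Ioc 0 t, f s i * f s j)
    {y : ℝ} (hy : 0 ≤ y) (k l : ι) : m y k l = ∫ u in 0..y, f u k * f u l := by
  rw [hm, intervalIntegral.integral_of_le hy, of_apply]

theorem gram_isSymm (hm : ∀ t, m t = Matrix.of fun i j => ∫ s in Ioc 0 t, f s i * f s j)
    (t : ℝ) : (m t).IsSymm := by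
  ext k l
  simp only [hm, transpose_apply, of_apply, mul_comm]

variable [Fintype ι] [DecidableEq ι]

theorem gram_inv_sub_gram_inv_eq_integral
    (hf_meas : ∀ i, Measurable fun s => f s i)
    (hf_loc : ∀ i, ∀ t > (0 : ℝ), IntegrableOn (fun s => (f s i) ^ 2) (Ioc 0 t))
    (hm : ∀ t, m t = Matrix.of fun i j => ∫ s in Ioc 0 t, f s i * f s j)
    (hm_inv : ∀ t > (0 : ℝ), IsUnit (m t)) {t s : ℝ} (ht : 0 < t) (hts : t ≤ s) (i j : ι) :
    IntervalIntegrable (fun u => ((m u)⁻¹ *ᵥ f u) i * ((m u)⁻¹ *ᵥ f u) j) volume t s ∧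
      (m t)⁻¹ i j - (m s)⁻¹ i j = ∫ u in t..s, ((m u)⁻¹ *ᵥ f u) i * ((m u)⁻¹ *ᵥ f u) j := by
  have hs : 0 < s := ht.trans_le hts
  have hprim := intervalIntegrable_mul_of_integrableOn_sq hf_meas hf_loc hs
  have hAC : ∀ k l, AbsolutelyContinuousOnInterval (fun x => m x k l) t s := fun k l =>
    (((hprim k l).absolutelyContinuousOnInterval_intervalIntegral left_mem_uIcc).mono
      (uIcc_subset_uIcc (by rw [uIcc_of_le hs.le]; exact ⟨ht.le, hts⟩) right_mem_uIcc)).congr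
      fun x hx => (gram_apply_eq_intervalIntegral hm (ht.le.trans (uIcc_of_le hts ▸ hx).1) k l).symm
  have hderiv : ∀ᵐ x, x ∈ Ioo t s →
      ∀ k l, HasDerivAt (fun y => m y k l) (vecMulVec (f x) (f x) k l) x := by
    filter_upwards [ae_all_iff.2 fun k => ae_all_iff.2 fun l =>
      (hprim k l).ae_hasDerivAt_integral] with x hx hxts k l
    have hx0 : 0 < x := ht.trans hxts.1
    refine (hx k l ?_ 0 left_mem_uIcc).congr_of_eventuallyEq ?_
    · rw [uIcc_of_le hs.le]; exact ⟨hx0.le, hxts.2.le⟩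
    · filter_upwards [lt_mem_nhds hx0] with y hy using gram_apply_eq_intervalIntegral hm hy.le k l
  have hdet : ∀ x ∈ Icc t s, IsUnit (m x).det := fun x hx =>
    (isUnit_iff_isUnit_det _).1 (hm_inv x (ht.trans_le hx.1))
  simpa only [(gram_isSymm hm _).inv.mul_vecMulVec_self_mul, vecMulVec_apply] using
    Matrix.inv_sub_inv_eq_intervalIntegral hts hAC hderiv hdet i j

end Gram

theorem alpha_eq_integral_phi_phiT_add_alphaInf_general
    (n : ℕ)
    (f : ℝ → Fin n → ℝ)
    (hf_meas : ∀ i, Measurable fun s => f s i)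
    (hf_loc : ∀ i, ∀ t > (0 : ℝ), IntegrableOn (fun s => (f s i) ^ 2) (Set.Ioc 0 t))
    (m : ℝ → Matrix (Fin n) (Fin n) ℝ)
    (hm : ∀ t, m t = Matrix.of fun i j => ∫ s in Set.Ioc 0 t, f s i * f s j)
    (hm_inv : ∀ t > (0 : ℝ), IsUnit (m t))
    (α : ℝ → Matrix (Fin n) (Fin n) ℝ)
    (hα : ∀ t, α t = (m t)⁻¹)
    (φ : ℝ → Fin n → ℝ)
    (hφ : ∀ t, φ t = (α t).mulVec (f t))
    (A : Matrix (Fin n) (Fin n) ℝ)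
    (hA : ∀ i j, Tendsto (fun s => α s i j) atTop (𝓝 (A i j))) :
    ∀ t > (0 : ℝ),
      (∀ i j, IntegrableOn (fun u => φ u i * φ u j) (Set.Ioi t)) ∧
      α t = (Matrix.of fun i j => ∫ u in Set.Ioi t, φ u i * φ u j) + A := by
  obtain rfl : α = fun t => (m t)⁻¹ := funext hα
  obtain rfl : φ = fun t => (m t)⁻¹ *ᵥ f t := funext hφ
  intro t ht
  have hFTC := fun s (hts : t ≤ s) =>
    gram_inv_sub_gram_inv_eq_integral hf_meas hf_loc hm hm_inv ht hts
  have hlim : ∀ i j, Tendsto (fun s => ∫ u in t..s, ((m u)⁻¹ *ᵥ f u) i * ((m u)⁻¹ *ᵥ f u) j)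
      atTop (𝓝 ((m t)⁻¹ i j - A i j)) := fun i j =>
    (tendsto_const_nhds.sub (hA i j)).congr' <|
      (eventually_ge_atTop t).mono fun s hts => (hFTC s hts i j).2
  have hint : ∀ i j, IntegrableOn (fun u => ((m u)⁻¹ *ᵥ f u) i * ((m u)⁻¹ *ᵥ f u) j) (Ioi t) :=
    fun i j => integrableOn_Ioi_mul_of_tendsto (fun s hts => (hFTC s hts i i).1)
      (fun s hts => (hFTC s hts j j).1) (fun s hts => (hFTC s hts i j).1) (hlim i i) (hlim j j)
  refine ⟨hint, ?_⟩
  ext i j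
  rw [Matrix.add_apply, of_apply, tendsto_nhds_unique
    (intervalIntegral_tendsto_integral_Ioi t (hint i j) tendsto_id) (hlim i j)]
  ring

/-- For every t > 0, the entrywise improper integral ∫_t^∞ φ(u)·φ(u)ᵀ du converges, and
α_t = ∫_t^∞ φ(u)·φ(u)ᵀ du + α_∞, where α_∞ = lim_{s→∞} α_s. -/
theorem alpha_eq_integral_phi_phiT_add_alphaInf
    (n : ℕ) (hn : 1 ≤ n)
    (f : ℝ → Fin n → ℝ)
    (hf_meas : ∀ i, Measurable fun s => f s i)
    (hf_loc : ∀ i, ∀ t > (0 : ℝ), IntegrableOn (fun s => (f s i) ^ 2) (Set.Ioc 0 t))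
    (m : ℝ → Matrix (Fin n) (Fin n) ℝ)
    (hm : ∀ t, m t = Matrix.of fun i j => ∫ s in Set.Ioc 0 t, f s i * f s j)
    (hm_inv : ∀ t > (0 : ℝ), IsUnit (m t))
    (α : ℝ → Matrix (Fin n) (Fin n) ℝ)
    (hα : ∀ t, α t = (m t)⁻¹)
    (φ : ℝ → Fin n → ℝ)
    (hφ : ∀ t, φ t = (α t).mulVec (f t))
    (A : Matrix (Fin n) (Fin n) ℝ)
    (hA : ∀ i j, Tendsto (fun s => α s i j) atTop (𝓝 (A i j))) :
    ∀ t > (0 : ℝ),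
      (∀ i j, IntegrableOn (fun u => φ u i * φ u j) (Set.Ioi t)) ∧
      α t = (Matrix.of fun i j => ∫ u in Set.Ioi t, φ u i * φ u j) + A :=
  alpha_eq_integral_phi_phiT_add_alphaInf_general n f hf_meas hf_loc m hm hm_inv α hα φ hφ A hA
end

section
/- For all 0 < s ≤ t < ∞, the Goursat–Volterra kernel k satisfies the self-reproduction property k(t,s) = ∫_t^∞ k(u,t)·k(u,s) du + f(t)ᵀ·α_∞·f(s), where the improper integral converges. -/
/-!
Write `Φ_t(x, y) = xᵀ α_t y` with `α_t = m_t⁻¹`. The resolvent identity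
`α_c - α_d = α_c (m_d - m_c) α_d` shows that `t ↦ Φ_t(x, y)` is absolutely continuous on compact
subintervals of `(0, ∞)`, and together with the Lebesgue differentiation theorem for `m_t` it
gives, for a.e. `t`, the derivative `-(xᵀ α_t f(t)) (yᵀ α_t f(t))` of the inverse matrix.
The fundamental theorem of calculus for absolutely continuous functions then yields
`∫_a^b (xᵀ α_u f(u)) (yᵀ α_u f(u)) du = Φ_a(x, y) - Φ_b(x, y)`, and `b → ∞` gives the identity
for `x = f(t)`, `y = f(s)`. The integrand is integrable on `(t, ∞)` since it is dominated by the
mean of the diagonal integrands `(xᵀ α_u f(u))²` and `(yᵀ α_u f(u))²`, whose integrals over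
`[t, b]` are bounded by `Φ_t(x, x)` and `Φ_t(y, y)` because every `α_b` is positive semidefinite.
-/

open MeasureTheory Filter Topology Matrix Set

noncomputable section

def gramian {ι : Type*} (f : ℝ → ι → ℝ) (t : ℝ) : Matrix ι ι ℝ :=
  Matrix.of fun i j => ∫ s in Ioc 0 t, f s i * f s j

/-- The Goursat–Volterra kernel is `k t s = gramInvForm f t (f s) (f t)`. -/
def gramInvForm {ι : Type*} [Fintype ι] [DecidableEq ι] (f : ℝ → ι → ℝ) (t : ℝ)
    (x y : ι → ℝ) : ℝ :=
  x ⬝ᵥ ((gramian f t)⁻¹ *ᵥ y)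

end

theorem ContinuousAt.matrix_inv {X 𝕜 ι : Type*} [TopologicalSpace X] [NormedField 𝕜]
    [Fintype ι] [DecidableEq ι] {M : X → Matrix ι ι 𝕜} {x : X} (hM : ContinuousAt M x)
    (hx : IsUnit (M x)) : ContinuousAt (fun y => (M y)⁻¹) x := by
  refine (continuousAt_matrix_inv _ ?_).comp hM
  rw [Ring.inverse_eq_inv']
  exact continuousAt_inv₀ ((isUnit_iff_isUnit_det _).1 hx).ne_zero

theorem hasDerivAt_matrix_inv_apply {ι : Type*} [Fintype ι] [DecidableEq ι]
    {M : ℝ → Matrix ι ι ℝ} {M' : Matrix ι ι ℝ} {w : ℝ}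
    (hM : ∀ i j, HasDerivAt (fun t => M t i j) (M' i j) w) (hw : IsUnit (M w)) (i j : ι) :
    HasDerivAt (fun t => (M t)⁻¹ i j) (-((M w)⁻¹ * M' * (M w)⁻¹) i j) w := by
  have hMc : ContinuousAt M w :=
    continuousAt_pi.2 fun i => continuousAt_pi.2 fun j => (hM i j).continuousAt
  have hunit : ∀ᶠ t in 𝓝 w, IsUnit (M t) := by
    filter_upwards [(continuous_id.matrix_det.continuousAt.comp hMc).eventually_ne
      ((isUnit_iff_isUnit_det _).1 hw).ne_zero]
      with t ht using (isUnit_iff_isUnit_det _).2 (isUnit_iff_ne_zero.2 ht)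
  have hslope : Tendsto (slope M w) (𝓝[≠] w) (𝓝 M') :=
    tendsto_pi_nhds.2 fun i => tendsto_pi_nhds.2 fun j => hasDerivAt_iff_tendsto_slope.1 (hM i j)
  have hlim := ((((hMc.matrix_inv hw).tendsto.mono_left nhdsWithin_le_nhds).mul hslope).mul_const
    (M w)⁻¹).neg
  rw [hasDerivAt_iff_tendsto_slope]
  refine (((continuous_apply j).comp (continuous_apply i)).tendsto _).comp hlim |>.congr' ?_
  filter_upwards [nhdsWithin_le_nhds hunit] with t ht
  have hslope_inv : slope (fun t => (M t)⁻¹) w t = -((M t)⁻¹ * slope M w t * (M w)⁻¹) := by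
    rw [slope_def_module, slope_def_module, inv_sub_inv (iff_of_true ht hw), ← neg_sub (M t),
      Matrix.mul_neg, Matrix.neg_mul, Matrix.mul_smul, Matrix.smul_mul, smul_neg]
  exact (congrFun (congrFun hslope_inv i) j).symm

theorem AbsolutelyContinuousOnInterval.of_dist_le {X Y : Type*} [PseudoMetricSpace X]
    [PseudoMetricSpace Y] {f : ℝ → X} {g : ℝ → Y} {a b K : ℝ}
    (hg : AbsolutelyContinuousOnInterval g a b)
    (hfg : ∀ x ∈ uIcc a b, ∀ y ∈ uIcc a b, dist (f x) (f y) ≤ K * dist (g x) (g y)) :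
    AbsolutelyContinuousOnInterval f a b := by
  unfold AbsolutelyContinuousOnInterval at hg ⊢
  refine squeeze_zero' (Eventually.of_forall fun E => Finset.sum_nonneg fun i _ => dist_nonneg) ?_
    (by simpa using hg.const_mul K)
  filter_upwards [mem_inf_of_right (mem_principal_self _)] with E hE
  rw [Finset.mul_sum]
  exact Finset.sum_le_sum fun i hi => hfg _ (hE.1 i hi).1 _ (hE.1 i hi).2

theorem integrable_mul_of_integrable_sq {X : Type*} [MeasurableSpace X] {μ : Measure X}
    {g h : X → ℝ} (hg : AEStronglyMeasurable g μ) (hh : AEStronglyMeasurable h μ)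
    (hg2 : Integrable (fun x => g x ^ 2) μ) (hh2 : Integrable (fun x => h x ^ 2) μ) :
    Integrable (fun x => g x * h x) μ :=
  ((memLp_two_iff_integrable_sq hg).2 hg2).integrable_mul ((memLp_two_iff_integrable_sq hh).2 hh2)

theorem abs_dotProduct_mul_dotProduct_le {ι : Type*} [Fintype ι] (p q v : ι → ℝ) :
    |(p ⬝ᵥ v) * (q ⬝ᵥ v)| ≤ (p ⬝ᵥ p + q ⬝ᵥ q) / 2 * (v ⬝ᵥ v) := by
  have cauchy_schwarz : ∀ u : ι → ℝ, (u ⬝ᵥ v) ^ 2 ≤ (u ⬝ᵥ u) * (v ⬝ᵥ v) := fun u => by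
    simpa only [dotProduct, sq] using Finset.sum_mul_sq_le_sq_mul_sq Finset.univ u v
  have hp := cauchy_schwarz p
  have hq := cauchy_schwarz q
  rw [abs_mul]
  nlinarith [sq_abs (p ⬝ᵥ v), sq_abs (q ⬝ᵥ v), sq_nonneg (|p ⬝ᵥ v| - |q ⬝ᵥ v|)]

section Gramian

variable {ι : Type*} {f : ℝ → ι → ℝ}

theorem gramian_transpose (t : ℝ) : (gramian f t)ᵀ = gramian f t := by
  ext i j
  simp only [gramian, transpose_apply, of_apply, mul_comm]

theorem gramian_apply_eq_intervalIntegral {t : ℝ} (ht : 0 ≤ t) (i j : ι) :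
    gramian f t i j = ∫ s in 0..t, f s i * f s j := by
  rw [intervalIntegral.integral_of_le ht]
  rfl

theorem gramInvForm_comm [Fintype ι] [DecidableEq ι] (t : ℝ) (x y : ι → ℝ) :
    gramInvForm f t x y = gramInvForm f t y x := by
  rw [gramInvForm, gramInvForm, dotProduct_comm, dotProduct_mulVec, ← mulVec_transpose,
    transpose_nonsing_inv, gramian_transpose]

variable (hf : ∀ i j t, IntegrableOn (fun s => f s i * f s j) (Ioc 0 t))
include hf

theorem intervalIntegrable_apply_mul_apply {c d : ℝ} (hc : 0 ≤ c) (hd : 0 ≤ d) (i j : ι) :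
    IntervalIntegrable (fun s => f s i * f s j) volume c d := by
  have h0 : ∀ e, 0 ≤ e → IntervalIntegrable (fun s => f s i * f s j) volume 0 e := fun e he =>
    (intervalIntegrable_iff_integrableOn_Ioc_of_le he).2 (hf i j e)
  exact (h0 c hc).symm.trans (h0 d hd)

theorem continuousAt_gramian {w : ℝ} (hw : 0 < w) : ContinuousAt (gramian f) w := by
  refine continuousAt_pi.2 fun i => continuousAt_pi.2 fun j => ?_
  have hprim : ContinuousOn (fun t => ∫ s in 0..t, f s i * f s j) (uIcc 0 (w + 1)) :=
    intervalIntegral.continuousOn_primitive_interval'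
      (intervalIntegrable_apply_mul_apply hf le_rfl (by linarith) i j) left_mem_uIcc
  rw [uIcc_of_le (by linarith)] at hprim
  refine (hprim.continuousAt (Icc_mem_nhds hw (by linarith))).congr ?_
  filter_upwards [Ioi_mem_nhds hw] with t ht
  exact (gramian_apply_eq_intervalIntegral ht.le i j).symm

variable [Fintype ι]

theorem ae_hasDerivAt_gramian :
    ∀ᵐ w, 0 < w → ∀ i j, HasDerivAt (fun t => gramian f t i j) (f w i * f w j) w := by
  have hLDT : ∀ i j (N : ℕ), ∀ᵐ w, w ∈ uIcc 0 (N : ℝ) → ∀ c ∈ uIcc 0 (N : ℝ),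
      HasDerivAt (fun t => ∫ s in c..t, f s i * f s j) (f w i * f w j) w := fun i j N =>
    (intervalIntegrable_apply_mul_apply hf le_rfl N.cast_nonneg i j).ae_hasDerivAt_integral
  filter_upwards [ae_all_iff.2 fun i => ae_all_iff.2 fun j => ae_all_iff.2 (hLDT i j)]
    with w hw hw0 i j
  obtain ⟨N, hN⟩ := exists_nat_gt w
  have hmem : w ∈ uIcc 0 (N : ℝ) := by
    rw [uIcc_of_le N.cast_nonneg]
    exact ⟨hw0.le, hN.le⟩
  refine (hw i j N hmem 0 left_mem_uIcc).congr_of_eventuallyEq ?_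
  filter_upwards [Ioi_mem_nhds hw0] with t ht using gramian_apply_eq_intervalIntegral ht.le i j

theorem intervalIntegrable_dotProduct_self {c d : ℝ} (hc : 0 ≤ c) (hd : 0 ≤ d) :
    IntervalIntegrable (fun s => f s ⬝ᵥ f s) volume c d := by
  simpa only [dotProduct, Finset.sum_fn] using IntervalIntegrable.sum Finset.univ
    fun i _ => intervalIntegrable_apply_mul_apply hf hc hd i i

theorem dotProduct_gramian_sub_mulVec {c d : ℝ} (hc : 0 ≤ c) (hd : 0 ≤ d) (p q : ι → ℝ) :
    p ⬝ᵥ ((gramian f d - gramian f c) *ᵥ q) = ∫ s in c..d, (p ⬝ᵥ f s) * (q ⬝ᵥ f s) := by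
  have hint := intervalIntegrable_apply_mul_apply hf hc hd
  have hexpand : ∀ s, (p ⬝ᵥ f s) * (q ⬝ᵥ f s) = ∑ i, ∑ j, p i * q j * (f s i * f s j) :=
    fun s => by simp only [dotProduct, Finset.sum_mul_sum]; congr! 2; ring
  have hrow : ∀ i, IntervalIntegrable (fun s => ∑ j, p i * q j * (f s i * f s j)) volume c d :=
    fun i => by
      simpa only [Finset.sum_fn] using IntervalIntegrable.sum Finset.univ fun j _ =>
        (hint i j).const_mul (p i * q j)
  rw [intervalIntegral.integral_congr fun s _ => hexpand s,
    intervalIntegral.integral_finsetSum fun i _ => hrow i]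
  refine Finset.sum_congr rfl fun i _ => ?_
  rw [intervalIntegral.integral_finsetSum fun j _ => (hint i j).const_mul _, mulVec,
    dotProduct, Finset.mul_sum]
  refine Finset.sum_congr rfl fun j _ => ?_
  rw [intervalIntegral.integral_const_mul, Matrix.sub_apply, gramian_apply_eq_intervalIntegral hd,
    gramian_apply_eq_intervalIntegral hc, intervalIntegral.integral_interval_sub_left
      (intervalIntegrable_apply_mul_apply hf le_rfl hd i j)
      (intervalIntegrable_apply_mul_apply hf le_rfl hc i j)]
  ring

variable [DecidableEq ι] (hinv : ∀ t > 0, IsUnit (gramian f t))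
include hinv

theorem gramInvForm_sub {c d : ℝ} (hc : 0 < c) (hd : 0 < d) (x y : ι → ℝ) :
    gramInvForm f c x y - gramInvForm f d x y =
      ∫ s in c..d, ((gramian f c)⁻¹ *ᵥ x) ⬝ᵥ f s * (((gramian f d)⁻¹ *ᵥ y) ⬝ᵥ f s) := by
  rw [gramInvForm, gramInvForm, ← dotProduct_sub, ← sub_mulVec,
    inv_sub_inv (iff_of_true (hinv c hc) (hinv d hd)), ← mulVec_mulVec, ← mulVec_mulVec,
    dotProduct_mulVec, ← mulVec_transpose, transpose_nonsing_inv, gramian_transpose,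
    dotProduct_gramian_sub_mulVec hf hc.le hd.le]

theorem gramInvForm_self_nonneg {t : ℝ} (ht : 0 < t) (z : ι → ℝ) : 0 ≤ gramInvForm f t z z := by
  have hgram0 : gramian f 0 = 0 := by ext; simp [gramian]
  have hz : gramInvForm f t z z = ∫ s in 0..t, (((gramian f t)⁻¹ *ᵥ z) ⬝ᵥ f s) ^ 2 := by
    simp_rw [sq]
    rw [← dotProduct_gramian_sub_mulVec hf le_rfl ht.le, hgram0, sub_zero, mulVec_mulVec,
      mul_nonsing_inv _ ((isUnit_iff_isUnit_det _).1 (hinv t ht)), one_mulVec, dotProduct_comm]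
    rfl
  rw [hz]
  exact intervalIntegral.integral_nonneg ht.le fun s _ => sq_nonneg _

theorem abs_gramInvForm_sub_le {c d K : ℝ} (hc : 0 < c) (hcd : c ≤ d) {x y : ι → ℝ}
    (hx : ((gramian f c)⁻¹ *ᵥ x) ⬝ᵥ ((gramian f c)⁻¹ *ᵥ x) ≤ K)
    (hy : ((gramian f d)⁻¹ *ᵥ y) ⬝ᵥ ((gramian f d)⁻¹ *ᵥ y) ≤ K) :
    |gramInvForm f c x y - gramInvForm f d x y| ≤ K * ∫ s in c..d, f s ⬝ᵥ f s := by
  rw [gramInvForm_sub hf hinv hc (hc.trans_le hcd), ← intervalIntegral.integral_const_mul,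
    ← Real.norm_eq_abs]
  refine intervalIntegral.norm_integral_le_of_norm_le hcd (ae_of_all _ fun s _ => ?_)
    ((intervalIntegrable_dotProduct_self hf hc.le (hc.le.trans hcd)).const_mul K)
  refine (abs_dotProduct_mul_dotProduct_le _ _ _).trans ?_
  exact mul_le_mul_of_nonneg_right (by linarith) (Finset.sum_nonneg fun i _ => mul_self_nonneg _)

theorem continuousOn_gramian_inv : ContinuousOn (fun t => (gramian f t)⁻¹) (Ioi 0) :=
  fun w hw => ((continuousAt_gramian hf hw).matrix_inv (hinv w hw)).continuousWithinAt

theorem absolutelyContinuousOnInterval_gramInvForm {a b : ℝ} (ha : 0 < a) (hab : a ≤ b)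
    (x y : ι → ℝ) : AbsolutelyContinuousOnInterval (fun t => gramInvForm f t x y) a b := by
  have hpos : ∀ c ∈ Icc a b, 0 < c := fun c hc => ha.trans_le hc.1
  have hself : ∀ v : ι → ℝ, 0 ≤ v ⬝ᵥ v := fun v => Finset.sum_nonneg fun i _ => mul_self_nonneg _
  have hcont : ContinuousOn (fun c => ((gramian f c)⁻¹ *ᵥ x) ⬝ᵥ ((gramian f c)⁻¹ *ᵥ x) +
      ((gramian f c)⁻¹ *ᵥ y) ⬝ᵥ ((gramian f c)⁻¹ *ᵥ y)) (Icc a b) :=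
    (by fun_prop : Continuous fun A : Matrix ι ι ℝ => (A *ᵥ x) ⬝ᵥ (A *ᵥ x) + (A *ᵥ y) ⬝ᵥ (A *ᵥ y))
      |>.comp_continuousOn ((continuousOn_gramian_inv hf hinv).mono hpos)
  obtain ⟨K, hK⟩ := isCompact_Icc.exists_bound_of_continuousOn hcont
  have hprim := (intervalIntegrable_dotProduct_self hf ha.le (ha.le.trans hab))
    |>.absolutelyContinuousOnInterval_intervalIntegral (c := a) left_mem_uIcc
  refine hprim.of_dist_le (K := K) ?_
  rw [uIcc_of_le hab]
  intro c hc d hd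
  wlog hcd : c ≤ d generalizing c d
  · rw [dist_comm, dist_comm (∫ s in a..c, _)]
    exact this d hd c hc (le_of_not_ge hcd)
  have hKx := (le_abs_self _).trans (hK c hc)
  have hKy := (le_abs_self _).trans (hK d hd)
  rw [Real.dist_eq, Real.dist_eq, abs_sub_comm (∫ s in a..c, _),
    intervalIntegral.integral_interval_sub_left
      (intervalIntegrable_dotProduct_self hf ha.le (hpos d hd).le)
      (intervalIntegrable_dotProduct_self hf ha.le (hpos c hc).le)]
  refine (abs_gramInvForm_sub_le hf hinv (hpos c hc) hcd
    (by linarith [hself ((gramian f c)⁻¹ *ᵥ y)]) (by linarith [hself ((gramian f d)⁻¹ *ᵥ x)])).trans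
    (mul_le_mul_of_nonneg_left (le_abs_self _) ((norm_nonneg _).trans (hK c hc)))

omit hf in
theorem hasDerivAt_gramInvForm {w : ℝ} (hw : 0 < w)
    (hder : ∀ i j, HasDerivAt (fun t => gramian f t i j) (f w i * f w j) w) (x y : ι → ℝ) :
    HasDerivAt (fun t => gramInvForm f t x y)
      (-(gramInvForm f w x (f w) * gramInvForm f w y (f w))) w := by
  have hentry := hasDerivAt_matrix_inv_apply (M' := vecMulVec (f w) (f w)) hder (hinv w hw)
  have h : HasDerivAt (fun t => gramInvForm f t x y)
      (x ⬝ᵥ (-((gramian f w)⁻¹ * vecMulVec (f w) (f w) * (gramian f w)⁻¹) *ᵥ y)) w :=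
    HasDerivAt.fun_sum fun i _ => (HasDerivAt.fun_sum fun j _ =>
      (hentry i j).mul_const (y j)).const_mul (x i)
  convert h using 1
  rw [mul_vecMulVec, vecMulVec_mul, neg_mulVec, vecMulVec_mulVec, dotProduct_neg, op_smul_eq_smul,
    dotProduct_smul, smul_eq_mul, ← dotProduct_mulVec, gramInvForm_comm w y, gramInvForm,
    gramInvForm, mul_comm]

theorem deriv_gramInvForm_ae_eq {a b : ℝ} (ha : 0 < a) (hab : a ≤ b) (x y : ι → ℝ) :
    ∀ᵐ w, w ∈ uIoc a b → -deriv (fun t => gramInvForm f t x y) w =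
      gramInvForm f w x (f w) * gramInvForm f w y (f w) := by
  filter_upwards [ae_hasDerivAt_gramian hf] with w hder hw
  rw [uIoc_of_le hab] at hw
  have hw0 : 0 < w := ha.trans hw.1
  rw [(hasDerivAt_gramInvForm hinv hw0 (hder hw0) x y).deriv, neg_neg]

theorem intervalIntegrable_gramInvForm_mul {a b : ℝ} (ha : 0 < a) (hab : a ≤ b) (x y : ι → ℝ) :
    IntervalIntegrable (fun w => gramInvForm f w x (f w) * gramInvForm f w y (f w)) volume a b :=
  (absolutelyContinuousOnInterval_gramInvForm hf hinv ha hab x y).intervalIntegrable_deriv.neg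
    |>.congr_ae ((ae_restrict_iff' measurableSet_uIoc).2
      (deriv_gramInvForm_ae_eq hf hinv ha hab x y))

theorem integral_gramInvForm_mul {a b : ℝ} (ha : 0 < a) (hab : a ≤ b) (x y : ι → ℝ) :
    ∫ w in a..b, gramInvForm f w x (f w) * gramInvForm f w y (f w) =
      gramInvForm f a x y - gramInvForm f b x y := by
  rw [← intervalIntegral.integral_congr_ae (deriv_gramInvForm_ae_eq hf hinv ha hab x y),
    intervalIntegral.integral_neg,
    (absolutelyContinuousOnInterval_gramInvForm hf hinv ha hab x y).integral_deriv_eq_sub, neg_sub]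

theorem integrableOn_Ioi_gramInvForm_mul {t : ℝ} (ht : 0 < t) (x y : ι → ℝ) :
    IntegrableOn (fun w => gramInvForm f w x (f w) * gramInvForm f w y (f w)) (Ioi t) := by
  refine integrableOn_Ioi_of_intervalIntegral_norm_bounded
    ((gramInvForm f t x x + gramInvForm f t y y) / 2) t (fun T => ?_) tendsto_id ?_
  · rcases le_total t T with h | h
    · exact (intervalIntegrable_iff_integrableOn_Ioc_of_le h).1
        (intervalIntegrable_gramInvForm_mul hf hinv ht h x y)
    · rw [id, Ioc_eq_empty (not_lt.2 h)]
      exact integrableOn_empty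
  filter_upwards [eventually_ge_atTop t] with T hT
  have hint := fun z₁ z₂ => intervalIntegrable_gramInvForm_mul hf hinv ht hT z₁ z₂
  calc ∫ w in t..T, ‖gramInvForm f w x (f w) * gramInvForm f w y (f w)‖
      ≤ ∫ w in t..T, (gramInvForm f w x (f w) * gramInvForm f w x (f w) +
          gramInvForm f w y (f w) * gramInvForm f w y (f w)) / 2 := by
        refine intervalIntegral.integral_mono_on hT (hint x y).norm
          (((hint x x).add (hint y y)).div_const 2) fun w _ => ?_
        rw [Real.norm_eq_abs, abs_mul]
        nlinarith [two_mul_le_add_sq |gramInvForm f w x (f w)| |gramInvForm f w y (f w)|,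
          sq_abs (gramInvForm f w x (f w)), sq_abs (gramInvForm f w y (f w))]
    _ = (gramInvForm f t x x - gramInvForm f T x x +
          (gramInvForm f t y y - gramInvForm f T y y)) / 2 := by
        rw [intervalIntegral.integral_div, intervalIntegral.integral_add (hint x x) (hint y y),
          integral_gramInvForm_mul hf hinv ht hT, integral_gramInvForm_mul hf hinv ht hT]
    _ ≤ (gramInvForm f t x x + gramInvForm f t y y) / 2 := by
        linarith [gramInvForm_self_nonneg hf hinv (ht.trans_le hT) x,
          gramInvForm_self_nonneg hf hinv (ht.trans_le hT) y]

theorem integral_Ioi_gramInvForm_mul {t L : ℝ} (ht : 0 < t) {x y : ι → ℝ}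
    (hL : Tendsto (fun u => gramInvForm f u x y) atTop (𝓝 L)) :
    ∫ w in Ioi t, gramInvForm f w x (f w) * gramInvForm f w y (f w) = gramInvForm f t x y - L := by
  refine tendsto_nhds_unique (intervalIntegral_tendsto_integral_Ioi t
    (integrableOn_Ioi_gramInvForm_mul hf hinv ht x y) tendsto_id)
    ((tendsto_const_nhds.sub hL).congr' ?_)
  filter_upwards [eventually_ge_atTop t] with T hT
  exact (integral_gramInvForm_mul hf hinv ht hT x y).symm

end Gramian

theorem kernel_self_reproduction_at_infinity_general
    (n : ℕ)
    (f : ℝ → Fin n → ℝ)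
    (hf_meas : ∀ i, Measurable fun s => f s i)
    (hf_loc : ∀ i, ∀ t > (0 : ℝ), IntegrableOn (fun s => (f s i) ^ 2) (Set.Ioc 0 t))
    (m : ℝ → Matrix (Fin n) (Fin n) ℝ)
    (hm : ∀ t, m t = Matrix.of fun i j => ∫ s in Set.Ioc 0 t, f s i * f s j)
    (hm_inv : ∀ t > (0 : ℝ), IsUnit (m t))
    (α : ℝ → Matrix (Fin n) (Fin n) ℝ)
    (hα : ∀ t, α t = (m t)⁻¹)
    (φ : ℝ → Fin n → ℝ)
    (hφ : ∀ t, φ t = (α t).mulVec (f t))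
    (k : ℝ → ℝ → ℝ)
    (hk : ∀ s t : ℝ, 0 < s → s ≤ t → k t s = φ t ⬝ᵥ f s)
    (A : Matrix (Fin n) (Fin n) ℝ)
    (hA : ∀ i j, Tendsto (fun u => α u i j) atTop (𝓝 (A i j))) :
    ∀ s t : ℝ, 0 < s → s ≤ t →
      IntegrableOn (fun u => k u t * k u s) (Set.Ioi t) ∧
      k t s = (∫ u in Set.Ioi t, k u t * k u s) + f t ⬝ᵥ A.mulVec (f s) := by
  intro s t hs hst
  have ht : 0 < t := hs.trans_le hst
  obtain rfl : m = gramian f := funext hm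
  obtain rfl : α = fun t => (gramian f t)⁻¹ := funext hα
  have hf : ∀ i j t, IntegrableOn (fun s => f s i * f s j) (Ioc 0 t) := fun i j t => by
    rcases le_or_gt t 0 with h | h
    · rw [Ioc_eq_empty (not_lt.2 h)]
      exact integrableOn_empty
    exact integrable_mul_of_integrable_sq (hf_meas i).aestronglyMeasurable
      (hf_meas j).aestronglyMeasurable (hf_loc i t h) (hf_loc j t h)
  have hkernel : ∀ u ∈ Ioi t,
      k u t * k u s = gramInvForm f u (f t) (f u) * gramInvForm f u (f s) (f u) := fun u hu => by
    rw [hk t u ht (le_of_lt hu), hk s u hs (hst.trans (le_of_lt hu)), hφ, dotProduct_comm,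
      dotProduct_comm (_ *ᵥ f u)]
    rfl
  have hlim : Tendsto (fun u => gramInvForm f u (f t) (f s)) atTop (𝓝 (f t ⬝ᵥ A *ᵥ f s)) :=
    ((by fun_prop : Continuous fun B : Matrix (Fin n) (Fin n) ℝ => f t ⬝ᵥ B *ᵥ f s).tendsto A).comp
      (tendsto_pi_nhds.2 fun i => tendsto_pi_nhds.2 fun j => hA i j)
  refine ⟨(integrableOn_Ioi_gramInvForm_mul hf hm_inv ht _ _).congr_fun
    (fun u hu => (hkernel u hu).symm) measurableSet_Ioi, ?_⟩
  rw [setIntegral_congr_fun measurableSet_Ioi hkernel,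
    integral_Ioi_gramInvForm_mul hf hm_inv ht hlim, hk s t hs hst, hφ, dotProduct_comm,
    sub_add_cancel]
  exact gramInvForm_comm t (f s) (f t)

/-- For all 0 < s ≤ t < ∞, the Goursat–Volterra kernel k satisfies the self-reproduction
property k(t,s) = ∫_t^∞ k(u,t)·k(u,s) du + f(t)ᵀ·α_∞·f(s), where the improper integral
converges. -/
theorem kernel_self_reproduction_at_infinity
    (n : ℕ) (hn : 1 ≤ n)
    (f : ℝ → Fin n → ℝ)
    (hf_meas : ∀ i, Measurable fun s => f s i)
    (hf_loc : ∀ i, ∀ t > (0 : ℝ), IntegrableOn (fun s => (f s i) ^ 2) (Set.Ioc 0 t))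
    (m : ℝ → Matrix (Fin n) (Fin n) ℝ)
    (hm : ∀ t, m t = Matrix.of fun i j => ∫ s in Set.Ioc 0 t, f s i * f s j)
    (hm_inv : ∀ t > (0 : ℝ), IsUnit (m t))
    (α : ℝ → Matrix (Fin n) (Fin n) ℝ)
    (hα : ∀ t, α t = (m t)⁻¹)
    (φ : ℝ → Fin n → ℝ)
    (hφ : ∀ t, φ t = (α t).mulVec (f t))
    (k : ℝ → ℝ → ℝ)
    (hk : ∀ s t : ℝ, 0 < s → s ≤ t → k t s = φ t ⬝ᵥ f s)
    (A : Matrix (Fin n) (Fin n) ℝ)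
    (hA : ∀ i j, Tendsto (fun u => α u i j) atTop (𝓝 (A i j))) :
    ∀ s t : ℝ, 0 < s → s ≤ t →
      IntegrableOn (fun u => k u t * k u s) (Set.Ioi t) ∧
      k t s = (∫ u in Set.Ioi t, k u t * k u s) + f t ⬝ᵥ A.mulVec (f s) :=
  kernel_self_reproduction_at_infinity_general n f hf_meas hf_loc m hm hm_inv α hα φ hφ k hk A hA
end

section
/- For every index i with 1 ≤ i ≤ n, the diagonal entry (α_t)_{i,i} tends to +∞ as t → 0+. -/
/-!
The matrix `m t` is the Gram matrix of the `f i` in `L²(0, t]`, hence positive semidefinite, and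
being invertible it is positive definite. For a positive definite `A`, testing the quadratic form
of `A` at `A⁻¹ eᵢ - (A⁻¹)ᵢᵢ eᵢ` gives `(A⁻¹)ᵢᵢ ≥ 1 / Aᵢᵢ`, while `(m t)ᵢᵢ = ∫₀ᵗ fᵢ² → 0⁺`
as `t → 0⁺`.
-/

open MeasureTheory Filter Topology Matrix

namespace Matrix.PosDef

variable {ι : Type*} [Fintype ι] [DecidableEq ι] {A : Matrix ι ι ℝ}

theorem one_le_mul_inv_apply (hA : A.PosDef) (i : ι) : 1 ≤ A i i * A⁻¹ i i := by
  set u : ι → ℝ := Pi.single i 1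
  set b := A⁻¹ i i
  set v := A⁻¹ *ᵥ u
  have hAv : A *ᵥ v = u := by
    rw [mulVec_mulVec, mul_nonsing_inv _ ((isUnit_iff_isUnit_det A).1 hA.isUnit), one_mulVec]
  have hsymm : Aᵀ = A := by simpa [conjTranspose_eq_transpose_of_trivial] using hA.isHermitian.eq
  have hvu : v ⬝ᵥ u = b := by simp [u, v, b, mulVec_single]
  have huAu : u ⬝ᵥ (A *ᵥ u) = A i i := by simp [u, mulVec_single]
  have hvAu : v ⬝ᵥ (A *ᵥ u) = 1 := by
    rw [dotProduct_mulVec, ← mulVec_transpose, hsymm, hAv]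
    simp [u]
  have huu : u ⬝ᵥ u = 1 := by simp [u]
  have hq : star (v - b • u) ⬝ᵥ (A *ᵥ (v - b • u)) = b * (b * A i i - 1) := by
    simp only [star_trivial, mulVec_sub, mulVec_smul, hAv, sub_dotProduct, dotProduct_sub,
      smul_dotProduct, dotProduct_smul, hvu, huAu, hvAu, huu, smul_eq_mul]
    ring
  have hnonneg := hA.posSemidef.dotProduct_mulVec_nonneg (v - b • u)
  rw [hq, mul_nonneg_iff_of_pos_left hA.inv.diag_pos] at hnonneg
  linarith [mul_comm (A i i) b]

theorem inv_apply_self_le_inv_apply (hA : A.PosDef) (i : ι) : (A i i)⁻¹ ≤ A⁻¹ i i :=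
  (inv_le_iff_one_le_mul₀' hA.diag_pos).2 (hA.one_le_mul_inv_apply i)

end Matrix.PosDef

namespace MeasureTheory

theorem gram_toLp_eq_integral_mul {α ι : Type*} [MeasurableSpace α] {μ : Measure α}
    {g : ι → α → ℝ} (hg : ∀ i, MemLp (g i) 2 μ) :
    gram ℝ (fun i ↦ (hg i).toLp (g i)) = of fun i j ↦ ∫ a, g i a * g j a ∂μ := by
  ext i j
  rw [gram_apply, L2.inner_def, of_apply]
  refine integral_congr_ae ?_
  filter_upwards [(hg i).coeFn_toLp, (hg j).coeFn_toLp] with a hi hj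
  simp [hi, hj, mul_comm]

theorem posSemidef_integral_mul {α ι : Type*} [MeasurableSpace α] {μ : Measure α}
    [Finite ι] {g : ι → α → ℝ} (hg : ∀ i, MemLp (g i) 2 μ) :
    (of fun i j ↦ ∫ a, g i a * g j a ∂μ).PosSemidef :=
  gram_toLp_eq_integral_mul hg ▸ posSemidef_gram ℝ _

theorem IntegrableOn.tendsto_setIntegral_Ioc_nhdsGT {E : Type*} [NormedAddCommGroup E]
    [NormedSpace ℝ E] {μ : Measure ℝ} [NullSingletonClass μ] {g : ℝ → E} {a b : ℝ} (hab : a < b)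
    (hg : IntegrableOn g (Set.Ioc a b) μ) :
    Tendsto (fun t ↦ ∫ s in Set.Ioc a t, g s ∂μ) (𝓝[>] a) (𝓝 0) := by
  have hcont := intervalIntegral.continuousOn_primitive
    ((integrableOn_Icc_iff_integrableOn_Ioc enorm_ne_top).2 hg) a (Set.left_mem_Icc.2 hab.le)
  rw [ContinuousWithinAt, Set.Ioc_self, Measure.restrict_empty, integral_zero_measure] at hcont
  rw [← nhdsWithin_Ioc_eq_nhdsGT hab]
  exact hcont.mono_left (nhdsWithin_mono _ Set.Ioc_subset_Icc_self)

end MeasureTheory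

theorem alpha_diagonal_tendsto_atTop_at_zero_general
    (n : ℕ)
    (f : ℝ → Fin n → ℝ)
    (hf_meas : ∀ i, Measurable fun s => f s i)
    (hf_loc : ∀ i, ∀ t > (0 : ℝ), IntegrableOn (fun s => (f s i) ^ 2) (Set.Ioc 0 t))
    (m : ℝ → Matrix (Fin n) (Fin n) ℝ)
    (hm : ∀ t, m t = Matrix.of fun i j => ∫ s in Set.Ioc 0 t, f s i * f s j)
    (hm_inv : ∀ t > (0 : ℝ), IsUnit (m t))
    (α : ℝ → Matrix (Fin n) (Fin n) ℝ)
    (hα : ∀ t, α t = (m t)⁻¹) :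
    ∀ i : Fin n, Tendsto (fun t => α t i i) (𝓝[>] (0 : ℝ)) atTop := by
  intro i
  have hpos : ∀ t > (0 : ℝ), (m t).PosDef := fun t ht ↦ by
    refine (hm t ▸ posSemidef_integral_mul fun j ↦ ?_).posDef_iff_isUnit.2 (hm_inv t ht)
    exact (memLp_two_iff_integrable_sq (hf_meas j).aestronglyMeasurable).2 (hf_loc j t ht)
  have hdiag : Tendsto (fun t ↦ m t i i) (𝓝[>] 0) (𝓝[>] 0) := by
    refine tendsto_nhdsWithin_iff.2
      ⟨?_, eventually_nhdsWithin_of_forall fun t ht ↦ (hpos t ht).diag_pos⟩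
    simpa only [hm, of_apply, sq] using (hf_loc i 1 one_pos).tendsto_setIntegral_Ioc_nhdsGT one_pos
  refine tendsto_atTop_mono' _ ?_ (tendsto_inv_nhdsGT_zero.comp hdiag)
  filter_upwards [self_mem_nhdsWithin] with t ht
  exact hα t ▸ (hpos t ht).inv_apply_self_le_inv_apply i

/-- For every index i, the diagonal entry (α_t)_{i,i} tends to +∞ as t → 0+. -/
theorem alpha_diagonal_tendsto_atTop_at_zero
    (n : ℕ) (hn : 1 ≤ n)
    (f : ℝ → Fin n → ℝ)
    (hf_meas : ∀ i, Measurable fun s => f s i)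
    (hf_loc : ∀ i, ∀ t > (0 : ℝ), IntegrableOn (fun s => (f s i) ^ 2) (Set.Ioc 0 t))
    (m : ℝ → Matrix (Fin n) (Fin n) ℝ)
    (hm : ∀ t, m t = Matrix.of fun i j => ∫ s in Set.Ioc 0 t, f s i * f s j)
    (hm_inv : ∀ t > (0 : ℝ), IsUnit (m t))
    (α : ℝ → Matrix (Fin n) (Fin n) ℝ)
    (hα : ∀ t, α t = (m t)⁻¹) :
    ∀ i : Fin n, Tendsto (fun t => α t i i) (𝓝[>] (0 : ℝ)) atTop :=
  alpha_diagonal_tendsto_atTop_at_zero_general n f hf_meas hf_loc m hm hm_inv α hα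
end

section
/- The Goursat–Volterra kernel satisfies the self-reproducing property: for all 0 < s ≤ t < ∞, k(t,s) = ∫_0^s k(t,u)·k(s,u) du. -/
open MeasureTheory Filter Topology Matrix

/-- The Goursat–Volterra kernel satisfies the self-reproducing property:
for all 0 < s ≤ t < ∞, k(t,s) = ∫_0^s k(t,u)·k(s,u) du. -/
theorem kernel_self_reproducing
    (n : ℕ) (hn : 1 ≤ n)
    (f : ℝ → Fin n → ℝ)
    (hf_meas : ∀ i, Measurable fun s => f s i)
    (hf_loc : ∀ i, ∀ t > (0 : ℝ), IntegrableOn (fun s => (f s i) ^ 2) (Set.Ioc 0 t))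
    (m : ℝ → Matrix (Fin n) (Fin n) ℝ)
    (hm : ∀ t, m t = Matrix.of fun i j => ∫ s in Set.Ioc 0 t, f s i * f s j)
    (hm_inv : ∀ t > (0 : ℝ), IsUnit (m t))
    (α : ℝ → Matrix (Fin n) (Fin n) ℝ)
    (hα : ∀ t, α t = (m t)⁻¹)
    (φ : ℝ → Fin n → ℝ)
    (hφ : ∀ t, φ t = (α t).mulVec (f t))
    (k : ℝ → ℝ → ℝ)
    (hk : ∀ s t : ℝ, 0 < s → s ≤ t → k t s = φ t ⬝ᵥ f s) :
    ∀ s t : ℝ, 0 < s → s ≤ t →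
      IntegrableOn (fun u => k t u * k s u) (Set.Ioc 0 s) ∧
      k t s = ∫ u in Set.Ioc 0 s, k t u * k s u := by
  intro s t hs hst
  -- integrability of products f u i * f u j
  have hint : ∀ i j : Fin n, IntegrableOn (fun u => f u i * f u j) (Set.Ioc 0 s) := by
    intro i j
    have h1 := hf_loc i s hs
    have h2 := hf_loc j s hs
    have hmeas : AEStronglyMeasurable (fun u => f u i * f u j)
        (volume.restrict (Set.Ioc 0 s)) :=
      ((hf_meas i).mul (hf_meas j)).aestronglyMeasurable
    refine Integrable.mono' ((h1.add h2).const_mul (1/2 : ℝ)) hmeas ?_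
    filter_upwards with u
    simp only [Pi.add_apply, Real.norm_eq_abs]
    rcases abs_cases (f u i * f u j) with ⟨h, _⟩ | ⟨h, _⟩ <;> rw [h] <;>
      nlinarith [sq_nonneg (f u i - f u j), sq_nonneg (f u i + f u j)]
  -- the sum expansion
  set g : ℝ → ℝ := fun u => ∑ i : Fin n, ∑ j : Fin n, φ t i * φ s j * (f u i * f u j) with hg
  have hinteg_g : IntegrableOn g (Set.Ioc 0 s) := by
    apply integrable_finset_sum
    intro i _
    apply integrable_finset_sum
    intro j _
    exact (hint i j).const_mul _
  have heq : Set.EqOn (fun u => k t u * k s u) g (Set.Ioc 0 s) := by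
    intro u hu
    rcases hu with ⟨hu0, hus⟩
    simp only
    rw [hk u t hu0 (hus.trans hst), hk u s hu0 hus, hg]
    simp only [dotProduct, Finset.sum_mul_sum]
    apply Finset.sum_congr rfl
    intro i _
    apply Finset.sum_congr rfl
    intro j _
    ring
  have hinteg : IntegrableOn (fun u => k t u * k s u) (Set.Ioc 0 s) :=
    hinteg_g.congr_fun (fun u hu => (heq hu).symm) measurableSet_Ioc
  refine ⟨hinteg, ?_⟩
  have hintegral : (∫ u in Set.Ioc 0 s, k t u * k s u) = ∫ u in Set.Ioc 0 s, g u :=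
    setIntegral_congr_fun measurableSet_Ioc heq
  rw [hintegral]
  have hgval : (∫ u in Set.Ioc 0 s, g u)
      = ∑ i : Fin n, ∑ j : Fin n, φ t i * φ s j * (m s i j) := by
    rw [hg]
    rw [integral_finset_sum _ (fun i _ => integrable_finset_sum _ (fun j _ => (hint i j).const_mul _))]
    apply Finset.sum_congr rfl
    intro i _
    rw [integral_finset_sum _ (fun j _ => (hint i j).const_mul _)]
    apply Finset.sum_congr rfl
    intro j _
    rw [MeasureTheory.integral_const_mul, hm s]
    rfl
  rw [hgval]
  -- now show k t s equals this sum
  have hms : m s * (m s)⁻¹ = 1 :=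
    Matrix.mul_nonsing_inv _ ((Matrix.isUnit_iff_isUnit_det _).mp (hm_inv s hs))
  have hmv : (m s).mulVec (φ s) = f s := by
    rw [hφ s, hα s, Matrix.mulVec_mulVec, hms, Matrix.one_mulVec]
  rw [hk s t hs hst]
  have : φ t ⬝ᵥ f s = φ t ⬝ᵥ (m s).mulVec (φ s) := by rw [hmv]
  rw [this]
  simp only [dotProduct, Matrix.mulVec, dotProduct, Finset.mul_sum]
  apply Finset.sum_congr rfl
  intro i _
  apply Finset.sum_congr rfl
  intro j _
  ring
end

section
/- Let n = 2 and suppose ∫_0^∞ f_1(s)² ds < ∞ while ∫_0^∞ f_2(s)² ds = ∞. Then the limiting matrix α_∞ has (α_∞)_{1,1} = (∫_0^∞ f_1(s)² ds)⁻¹ and all its other entries equal to zero. -/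
/-!
Write `m t = !![a t, b t; b t, d t]`. Then `(m t)⁻¹ = (a - b² / d)⁻¹ • !![1, -b/d; -b/d, a/d]`,
where `a t → ∫ f₁² ≠ 0` and `d t → ∞`, so everything reduces to `b t ² / d t → 0`.
By Cauchy–Schwarz on `(t₀, t]`, `(b t - b t₀)² ≤ (a t - a t₀) · d t`, and `a t - a t₀` is small
once `t₀` is large because `a` converges; the fixed value `b t₀` is negligible against `d t → ∞`.
-/

open MeasureTheory Filter Topology Matrix

theorem sq_integral_mul_le_integral_sq_mul_integral_sq {α : Type*} [MeasurableSpace α]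
    {μ : Measure α} {u v : α → ℝ} (hu : MemLp u 2 μ) (hv : MemLp v 2 μ) :
    (∫ x, u x * v x ∂μ) ^ 2 ≤ (∫ x, u x ^ 2 ∂μ) * ∫ x, v x ^ 2 ∂μ := by
  have hquad (c : ℝ) : 0 ≤ (∫ x, u x ^ 2 ∂μ) * (c * c) + (-2 * ∫ x, u x * v x ∂μ) * c
      + ∫ x, v x ^ 2 ∂μ := by
    have huu : Integrable (fun x => c ^ 2 * u x ^ 2) μ := hu.integrable_sq.const_mul _
    have huv : Integrable (fun x => 2 * c * (u x * v x)) μ := (hu.integrable_mul hv).const_mul _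
    have h : 0 ≤ ∫ x, (c * u x - v x) ^ 2 ∂μ := integral_nonneg fun x => sq_nonneg _
    have hexpand (x : α) :
        (c * u x - v x) ^ 2 = c ^ 2 * u x ^ 2 + v x ^ 2 - 2 * c * (u x * v x) := by
      ring
    simp_rw [hexpand] at h
    have huuvv : Integrable (fun x => c ^ 2 * u x ^ 2 + v x ^ 2) μ := huu.add hv.integrable_sq
    rw [integral_sub huuvv huv, integral_add huu hv.integrable_sq,
      integral_const_mul, integral_const_mul] at h
    linarith
  have hdisc := discrim_le_zero hquad
  rw [discrim] at hdisc
  linarith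

section IocIntegral

variable {g : ℝ → ℝ} {a : ℝ}

theorem tendsto_setIntegral_Ioc_atTop (hg : IntegrableOn g (Set.Ioi a)) :
    Tendsto (fun t => ∫ s in Set.Ioc a t, g s) atTop (𝓝 (∫ s in Set.Ioi a, g s)) :=
  (intervalIntegral_tendsto_integral_Ioi a hg tendsto_id).congr'
    ((eventually_ge_atTop a).mono fun _ ht => intervalIntegral.integral_of_le ht)

theorem tendsto_setIntegral_Ioc_atTop_atTop (hg0 : ∀ s, 0 ≤ g s)
    (hloc : ∀ t, IntegrableOn g (Set.Ioc a t)) (hg : ¬IntegrableOn g (Set.Ioi a)) :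
    Tendsto (fun t => ∫ s in Set.Ioc a t, g s) atTop atTop := by
  have hmono : Monotone fun t => ∫ s in Set.Ioc a t, g s := fun _ t hst =>
    setIntegral_mono_set (hloc t) (.of_forall hg0) (Set.Ioc_subset_Ioc_right hst).eventuallyLE
  rw [tendsto_atTop_atTop_iff_of_monotone hmono]
  by_contra! hbdd
  obtain ⟨B, hB⟩ := hbdd
  refine hg (integrableOn_Ioi_of_intervalIntegral_norm_bounded B a hloc tendsto_id ?_)
  filter_upwards [eventually_ge_atTop a] with t ht
  simpa [intervalIntegral.integral_of_le ht, abs_of_nonneg (hg0 _)] using (hB t).le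

theorem setIntegral_Ioc_sub_setIntegral_Ioc {t₀ t : ℝ} (hg : IntegrableOn g (Set.Ioc a t))
    (h₀ : a ≤ t₀) (ht : t₀ ≤ t) :
    (∫ s in Set.Ioc a t, g s) - ∫ s in Set.Ioc a t₀, g s = ∫ s in Set.Ioc t₀ t, g s := by
  rw [sub_eq_iff_eq_add', ← setIntegral_union (Set.Ioc_disjoint_Ioc_of_le le_rfl) measurableSet_Ioc
    (hg.mono_set (Set.Ioc_subset_Ioc_right ht)) (hg.mono_set (Set.Ioc_subset_Ioc_left h₀)),
    Set.Ioc_union_Ioc_eq_Ioc h₀ ht]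

theorem memLp_two_restrict_Ioc_of_integrableOn_sq {u : ℝ → ℝ} (hu : Measurable u)
    (hloc : ∀ t > a, IntegrableOn (fun s => u s ^ 2) (Set.Ioc a t)) (t : ℝ) :
    MemLp u 2 (volume.restrict (Set.Ioc a t)) := by
  rcases le_or_gt t a with h | h
  · simp [Set.Ioc_eq_empty_of_le h]
  · exact (memLp_two_iff_integrable_sq hu.aestronglyMeasurable).2 (hloc t h)

theorem sq_setIntegral_Ioc_mul_sub_le {u v : ℝ → ℝ} {t₀ t : ℝ}
    (hu : MemLp u 2 (volume.restrict (Set.Ioc a t)))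
    (hv : MemLp v 2 (volume.restrict (Set.Ioc a t)))
    (h₀ : a ≤ t₀) (ht : t₀ ≤ t) :
    ((∫ s in Set.Ioc a t, u s * v s) - ∫ s in Set.Ioc a t₀, u s * v s) ^ 2 ≤
      ((∫ s in Set.Ioc a t, u s ^ 2) - ∫ s in Set.Ioc a t₀, u s ^ 2) *
        ((∫ s in Set.Ioc a t, v s ^ 2) - ∫ s in Set.Ioc a t₀, v s ^ 2) := by
  have hle : volume.restrict (Set.Ioc t₀ t) ≤ volume.restrict (Set.Ioc a t) :=
    Measure.restrict_mono (Set.Ioc_subset_Ioc_left h₀) le_rfl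
  rw [setIntegral_Ioc_sub_setIntegral_Ioc (g := fun s => u s * v s) (hu.integrable_mul hv) h₀ ht,
    setIntegral_Ioc_sub_setIntegral_Ioc hu.integrable_sq h₀ ht,
    setIntegral_Ioc_sub_setIntegral_Ioc hv.integrable_sq h₀ ht]
  exact sq_integral_mul_le_integral_sq_mul_integral_sq (hu.mono_measure hle) (hv.mono_measure hle)

end IocIntegral

theorem tendsto_sq_div_of_sq_sub_le_mul_sub {ι : Type*} [SemilatticeSup ι] [Nonempty ι]
    {a b d : ι → ℝ} {L : ℝ} (ha : Tendsto a atTop (𝓝 L)) (hd : Tendsto d atTop atTop)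
    (hb : ∀ᶠ t₀ in atTop, ∀ t ≥ t₀, (b t - b t₀) ^ 2 ≤ (a t - a t₀) * (d t - d t₀)) :
    Tendsto (fun t => b t ^ 2 / d t) atTop (𝓝 0) := by
  rw [Metric.tendsto_nhds]
  intro ε hε
  have ha_cauchy : ∀ᶠ t₀ in atTop, ∀ t ≥ t₀, |a t - a t₀| < ε / 4 := by
    obtain ⟨N, hN⟩ := Metric.cauchySeq_iff.1 ha.cauchySeq (ε / 4) (by positivity)
    filter_upwards [eventually_ge_atTop N] with t₀ ht₀ t ht
    exact hN t (ht₀.trans ht) t₀ ht₀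
  obtain ⟨t₀, hb₀, ha₀, hd₀⟩ := (hb.and (ha_cauchy.and (hd.eventually_ge_atTop 0))).exists
  filter_upwards [eventually_ge_atTop t₀, hd.eventually_ge_atTop (d t₀),
    hd.eventually_gt_atTop (4 * b t₀ ^ 2 / ε)] with t ht hdt hdt_big
  -- `b t ^ 2 ≤ 2 (b t - b t₀) ^ 2 + 2 b t₀ ^ 2`, and each term is below `ε / 2 * d t`.
  have hdt_pos : 0 < d t := lt_of_le_of_lt (by positivity) hdt_big
  have hincr : (b t - b t₀) ^ 2 ≤ ε / 4 * d t :=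
    calc (b t - b t₀) ^ 2 ≤ (a t - a t₀) * (d t - d t₀) := hb₀ t ht
      _ ≤ |a t - a t₀| * (d t - d t₀) := mul_le_mul_of_nonneg_right (le_abs_self _) (by linarith)
      _ ≤ ε / 4 * d t := mul_le_mul (ha₀ t ht).le (by linarith) (by linarith) (by positivity)
  have hinit : 2 * b t₀ ^ 2 < ε / 2 * d t := by
    rw [div_lt_iff₀ hε] at hdt_big; linarith
  rw [dist_zero_right, Real.norm_eq_abs, abs_div, abs_of_nonneg (sq_nonneg _),
    abs_of_pos hdt_pos, div_lt_iff₀ hdt_pos]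
  nlinarith [sq_nonneg (b t - 2 * b t₀)]

-- Also valid for singular matrices, where both sides are `0`.
theorem inv_fin_two_symm_eq_smul {K : Type*} [Field K] {a b d : K} (hd : d ≠ 0) :
    (!![a, b; b, d])⁻¹ = (a - b ^ 2 / d)⁻¹ • !![1, -(b / d); -(b / d), a / d] := by
  rw [inv_def, adjugate_fin_two_of, det_fin_two_of, Ring.inverse_eq_inv']
  ext i j
  fin_cases i <;> fin_cases j <;> simp <;> field_simp

theorem tendsto_inv_fin_two_symm {ι : Type*} {l : Filter ι} {a b d : ι → ℝ} {L : ℝ}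
    (hL : L ≠ 0) (ha : Tendsto a l (𝓝 L)) (hd : Tendsto d l atTop)
    (hb : Tendsto (fun t => b t ^ 2 / d t) l (𝓝 0)) :
    Tendsto (fun t => (!![a t, b t; b t, d t])⁻¹) l (𝓝 !![L⁻¹, 0; 0, 0]) := by
  have hb' : Tendsto (fun t => b t / d t) l (𝓝 0) := by
    have hsq : Tendsto (fun t => (b t / d t) ^ 2) l (𝓝 0) := by
      have h := hb.mul hd.inv_tendsto_atTop
      rw [zero_mul] at h
      exact h.congr fun t => by simp only [Pi.inv_apply]; ring
    rw [tendsto_zero_iff_abs_tendsto_zero]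
    simpa [Function.comp_def, Real.sqrt_sq_eq_abs] using hsq.sqrt
  have hschur : Tendsto (fun t => (a t - b t ^ 2 / d t)⁻¹) l (𝓝 L⁻¹) := by
    simpa using (ha.sub hb).inv₀ (by simpa using hL)
  have hN : Tendsto (fun t => !![1, -(b t / d t); -(b t / d t), a t / d t]) l
      (𝓝 !![1, 0; 0, 0]) := by
    have had : Tendsto (fun t => a t / d t) l (𝓝 0) := by
      simpa [div_eq_mul_inv] using ha.mul hd.inv_tendsto_atTop
    refine tendsto_pi_nhds.2 fun i => tendsto_pi_nhds.2 fun j => ?_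
    fin_cases i <;> fin_cases j
    · simpa using tendsto_const_nhds
    · simpa using hb'.neg
    · simpa using hb'.neg
    · simpa using had
  have hinv : (fun t => (!![a t, b t; b t, d t])⁻¹) =ᶠ[l]
      fun t => (a t - b t ^ 2 / d t)⁻¹ • !![1, -(b t / d t); -(b t / d t), a t / d t] := by
    filter_upwards [hd.eventually_ne_atTop 0] with t ht using inv_fin_two_symm_eq_smul ht
  rw [tendsto_congr' hinv]
  simpa using hschur.smul hN

/-- Let n = 2 and suppose f_1 ∈ L²((0,∞)) while ∫_0^∞ f_2(s)² ds = ∞. Then the limiting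
matrix α_∞ has (α_∞)_{1,1} = (∫_0^∞ f_1(s)² ds)⁻¹ and all its other entries equal zero. -/
theorem alphaInf_structure_dim_two
    (f : ℝ → Fin 2 → ℝ)
    (hf_meas : ∀ i, Measurable fun s => f s i)
    (hf_loc : ∀ i, ∀ t > (0 : ℝ), IntegrableOn (fun s => (f s i) ^ 2) (Set.Ioc 0 t))
    (hf1_L2 : IntegrableOn (fun s => (f s 0) ^ 2) (Set.Ioi 0))
    (hf2_notL2 : ¬ IntegrableOn (fun s => (f s 1) ^ 2) (Set.Ioi 0))
    (m : ℝ → Matrix (Fin 2) (Fin 2) ℝ)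
    (hm : ∀ t, m t = Matrix.of fun i j => ∫ s in Set.Ioc 0 t, f s i * f s j)
    (hm_inv : ∀ t > (0 : ℝ), IsUnit (m t))
    (α : ℝ → Matrix (Fin 2) (Fin 2) ℝ)
    (hα : ∀ t, α t = (m t)⁻¹)
    (A : Matrix (Fin 2) (Fin 2) ℝ)
    (hA : ∀ i j, Tendsto (fun t => α t i j) atTop (𝓝 (A i j))) :
    A 0 0 = (∫ s in Set.Ioi 0, (f s 0) ^ 2)⁻¹ ∧
    A 0 1 = 0 ∧ A 1 0 = 0 ∧ A 1 1 = 0 := by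
  set a := fun t => ∫ s in Set.Ioc 0 t, f s 0 ^ 2
  set b := fun t => ∫ s in Set.Ioc 0 t, f s 0 * f s 1
  set d := fun t => ∫ s in Set.Ioc 0 t, f s 1 ^ 2
  set L := ∫ s in Set.Ioi 0, f s 0 ^ 2
  have hmem (i : Fin 2) (t : ℝ) : MemLp (f · i) 2 (volume.restrict (Set.Ioc 0 t)) :=
    memLp_two_restrict_Ioc_of_integrableOn_sq (hf_meas i) (hf_loc i) t
  have hm_eq (t : ℝ) : m t = !![a t, b t; b t, d t] := by
    ext i j; fin_cases i <;> fin_cases j <;> simp [hm, a, b, d, sq, mul_comm]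
  have hd : Tendsto d atTop atTop :=
    tendsto_setIntegral_Ioc_atTop_atTop (fun _ => sq_nonneg _) (fun t => (hmem 1 t).integrable_sq)
      hf2_notL2
  have hb : Tendsto (fun t => b t ^ 2 / d t) atTop (𝓝 0) := by
    refine tendsto_sq_div_of_sq_sub_le_mul_sub (tendsto_setIntegral_Ioc_atTop hf1_L2) hd ?_
    filter_upwards [eventually_ge_atTop 0] with t₀ ht₀ t ht
    exact sq_setIntegral_Ioc_mul_sub_le (hmem 0 t) (hmem 1 t) ht₀ ht
  have hL : L ≠ 0 := by
    have hdet : a 1 * d 1 - b 1 * b 1 ≠ 0 := by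
      simpa [hm_eq, det_fin_two_of] using ((isUnit_iff_isUnit_det _).mp (hm_inv 1 one_pos)).ne_zero
    have hcs : b 1 ^ 2 ≤ a 1 * d 1 :=
      sq_integral_mul_le_integral_sq_mul_integral_sq (hmem 0 1) (hmem 1 1)
    have ha₁ : 0 ≤ a 1 := setIntegral_nonneg measurableSet_Ioc fun _ _ => sq_nonneg _
    have ha₁L : a 1 ≤ L := setIntegral_mono_set hf1_L2 (.of_forall fun _ => sq_nonneg _)
      Set.Ioc_subset_Ioi_self.eventuallyLE
    intro hL0
    have ha₁0 : a 1 = 0 := by linarith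
    rw [ha₁0, zero_mul] at hcs hdet
    exact hdet (by nlinarith [sq_nonneg (b 1)])
  have hlim : Tendsto α atTop (𝓝 !![L⁻¹, 0; 0, 0]) := by
    rw [funext hα, funext fun t => congrArg Inv.inv (hm_eq t)]
    exact tendsto_inv_fin_two_symm hL (tendsto_setIntegral_Ioc_atTop hf1_L2) hd hb
  have hA' : Tendsto α atTop (𝓝 A) := tendsto_pi_nhds.2 fun i => tendsto_pi_nhds.2 (hA i)
  obtain rfl : A = !![L⁻¹, 0; 0, 0] := tendsto_nhds_unique hA' hlim
  simp
end

section
/- Let n ≥ 1 and λ_1,…,λ_n be pairwise distinct reals with λ_j > −1/2 for all j, and set a_{j,n} = (∏_{i=1}^n (λ_i + λ_j + 1)) / (∏_{i=1,i≠j}^n (λ_i − λ_j)). For t > 0, the n×n matrix m_t with entries (m_t)_{i,j} = t^{λ_i+λ_j+1}/(λ_i+λ_j+1) is invertible, and its inverse α_t has entries (α_t)_{i,j} = a_{i,n}·a_{j,n}·t^{−λ_i−λ_j−1}/(λ_i+λ_j+1). -/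
/-!
Put `x i = λ i + 1/2`. Then `m_t = D C D` with `D = diag (t ^ x i)` and `C` the symmetric
Cauchy matrix `(x i + x j)⁻¹`, so it suffices to invert `C`. With
`c j = ∏ i, (x i + x j) / ∏ i ≠ j, (x i - x j)` (the coefficient `a j`), `C⁻¹` has entries
`c i * c j / (x i + x j)`: the entries of the product reduce to the partial-fraction identity
`∑ k, c k / ((x i + x k) (x k + x j)) = δ i j / c i`, which is Lagrange interpolation of
`∏ l ≠ j, (x l - X)` at the nodes `-x k`, evaluated at `x i`.
-/

open Finset Matrix Polynomial

lemma degree_prod_erase_C_sub_X_lt {R ι : Type*} [CommRing R] [IsDomain R] [Fintype ι]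
    [DecidableEq ι] (x : ι → R) (j : ι) :
    (∏ l ∈ univ.erase j, (C (x l) - X)).degree < (#(univ : Finset ι) : WithBot ℕ) := by
  have hdeg : ∀ l, (C (x l) - X).degree = 1 := fun l => by
    rw [← neg_sub, degree_neg, degree_X_sub_C]
  rw [degree_prod]
  simp only [hdeg, sum_const, card_erase_of_mem (mem_univ j), nsmul_eq_mul, mul_one]
  exact_mod_cast Nat.sub_lt (card_pos.mpr ⟨j, mem_univ j⟩) one_pos

lemma diagonal_mul_mul_diagonal_mul_inv {R ι : Type*} [DivisionRing R] [Fintype ι]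
    [DecidableEq ι] {A B : Matrix ι ι R} (hAB : A * B = 1) {d : ι → R}
    (hd : ∀ i, d i ≠ 0) :
    diagonal d * A * diagonal d * (diagonal d⁻¹ * B * diagonal d⁻¹) = 1 := by
  have hdd : diagonal d * diagonal d⁻¹ = 1 := by
    rw [diagonal_mul_diagonal, ← diagonal_one]
    exact congrArg diagonal (funext fun i => mul_inv_cancel₀ (hd i))
  calc diagonal d * A * diagonal d * (diagonal d⁻¹ * B * diagonal d⁻¹)
      = diagonal d * (A * (diagonal d * diagonal d⁻¹) * B) * diagonal d⁻¹ := by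
        simp only [Matrix.mul_assoc]
    _ = 1 := by rw [hdd, Matrix.mul_one, hAB, Matrix.mul_one, hdd]

section SymmetricCauchy

variable {F ι : Type*} [Field F] [Fintype ι] [DecidableEq ι]

def cauchyCoeff (x : ι → F) (j : ι) : F :=
  (∏ i, (x i + x j)) / ∏ i ∈ univ.erase j, (x i - x j)

variable {x : ι → F}

lemma cauchyCoeff_ne_zero (hx : Function.Injective x) (hsum : ∀ i j, x i + x j ≠ 0) (j : ι) :
    cauchyCoeff x j ≠ 0 :=
  div_ne_zero (prod_ne_zero_iff.mpr fun i _ => hsum i j)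
    (prod_ne_zero_iff.mpr fun _ hi => sub_ne_zero.mpr (hx.ne (mem_erase.mp hi).1))

lemma prod_add_mul_sum_cauchyCoeff_div (hx : Function.Injective x)
    (hsum : ∀ i j, x i + x j ≠ 0) (i j : ι) :
    (∏ k, (x i + x k)) * ∑ k, cauchyCoeff x k / ((x i + x k) * (x k + x j)) =
      ∏ l ∈ univ.erase j, (x l - x i) := by
  have hnodes : Set.InjOn (fun k => -x k) ↑(univ : Finset ι) := (neg_injective.comp hx).injOn
  have hinterp := congrArg (eval (x i))
    (Lagrange.eq_interpolate hnodes (degree_prod_erase_C_sub_X_lt x j))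
  rw [Lagrange.eval_interpolate_not_at_node _ fun k _ h => hsum i k (by rw [h]; ring),
    Lagrange.eval_nodal] at hinterp
  simp only [eval_prod, eval_sub, eval_C, eval_X, sub_neg_eq_add] at hinterp
  rw [hinterp]
  congr 1
  refine sum_congr rfl fun k _ => ?_
  rw [cauchyCoeff, Lagrange.nodalWeight,
    ← mul_prod_erase univ (fun l => x l + x k) (mem_univ j), prod_inv_distrib]
  have hik := hsum i k
  have hkj := hsum k j
  have hnodeDiff : ∏ l ∈ univ.erase k, (x l - x k) = ∏ l ∈ univ.erase k, (-x k - -x l) :=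
    prod_congr rfl fun l _ => by ring
  rw [hnodeDiff]
  field_simp
  ring

lemma sum_cauchyCoeff_div (hx : Function.Injective x) (hsum : ∀ i j, x i + x j ≠ 0) (i j : ι) :
    ∑ k, cauchyCoeff x k / ((x i + x k) * (x k + x j)) =
      if i = j then (cauchyCoeff x i)⁻¹ else 0 := by
  have hprod : ∏ k, (x i + x k) ≠ 0 := prod_ne_zero_iff.mpr fun k _ => hsum i k
  rw [← mul_right_inj' hprod, prod_add_mul_sum_cauchyCoeff_div hx hsum]
  split_ifs with hij
  · subst hij
    rw [cauchyCoeff, inv_div]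
    simp only [add_comm (x _) (x i)]
    field_simp
  · rw [mul_zero]
    exact prod_eq_zero (mem_erase.mpr ⟨hij, mem_univ i⟩) (sub_self _)

lemma symmCauchyMatrix_mul_eq_one (hx : Function.Injective x) (hsum : ∀ i j, x i + x j ≠ 0) :
    (of fun i j => (x i + x j)⁻¹) *
      (of fun i j => cauchyCoeff x i * cauchyCoeff x j / (x i + x j)) = 1 := by
  ext i j
  have hterm : ∀ k, (x i + x k)⁻¹ * (cauchyCoeff x k * cauchyCoeff x j / (x k + x j)) =
      cauchyCoeff x j * (cauchyCoeff x k / ((x i + x k) * (x k + x j))) := fun k => by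
    field_simp
  simp only [mul_apply, of_apply, hterm, ← mul_sum, sum_cauchyCoeff_div hx hsum, one_apply]
  split_ifs with hij
  · subst hij
    exact mul_inv_cancel₀ (cauchyCoeff_ne_zero hx hsum i)
  · exact mul_zero _

end SymmetricCauchy

theorem muntz_gramian_inverse_general
    (n : ℕ)
    (L : Fin n → ℝ)
    (hL_inj : Function.Injective L)
    (hL_half : ∀ j, -1/2 < L j)
    (a : Fin n → ℝ)
    (ha : ∀ j, a j = (∏ i, (L i + L j + 1)) / (∏ i ∈ Finset.univ.erase j, (L i - L j)))
    (t : ℝ) (ht : 0 < t)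
    (m : Matrix (Fin n) (Fin n) ℝ)
    (hm : m = Matrix.of fun i j => t ^ (L i + L j + 1) / (L i + L j + 1)) :
    IsUnit m ∧
    m⁻¹ = Matrix.of fun i j => a i * a j * t ^ (-(L i) - L j - 1) / (L i + L j + 1) := by
  set x : Fin n → ℝ := fun i => L i + 1 / 2
  set α : Matrix (Fin n) (Fin n) ℝ :=
    of fun i j => a i * a j * t ^ (-(L i) - L j - 1) / (L i + L j + 1)
  have hx : Function.Injective x := fun i j h => hL_inj (add_right_cancel h)
  have hsum : ∀ i j, x i + x j ≠ 0 := fun i j => by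
    have := hL_half i; have := hL_half j; simp only [x]; linarith
  have hxx : ∀ i j, L i + L j + 1 = x i + x j := fun i j => by ring
  have hneg : ∀ i j, -(L i) - L j - 1 = -x i + -x j := fun i j => by ring
  have hac : a = cauchyCoeff x := funext fun j => by
    simp only [ha, cauchyCoeff, hxx, x, add_sub_add_right_eq_sub]
  have hm' : m = diagonal (fun i => t ^ x i) * (of fun i j => (x i + x j)⁻¹) *
      diagonal (fun i => t ^ x i) := by
    ext i j
    simp only [hm, hxx, Real.rpow_add ht, div_eq_mul_inv, of_apply, mul_diagonal, diagonal_mul]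
    ring
  have hα : α = diagonal (fun i => t ^ x i)⁻¹ *
      (of fun i j => cauchyCoeff x i * cauchyCoeff x j / (x i + x j)) *
      diagonal (fun i => t ^ x i)⁻¹ := by
    ext i j
    simp only [α, hac, hxx, hneg, of_apply, Real.rpow_add ht, Real.rpow_neg ht.le,
      mul_diagonal, diagonal_mul, Pi.inv_apply]
    ring
  have hmul : m * α = 1 := by
    rw [hm', hα]
    exact diagonal_mul_mul_diagonal_mul_inv (symmCauchyMatrix_mul_eq_one hx hsum)
      fun i => (Real.rpow_pos_of_pos ht (x i)).ne'
  exact ⟨(isUnit_iff_isUnit_det m).mpr (isUnit_det_of_right_inverse hmul),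
    inv_eq_right_inv hmul⟩

/-- For pairwise distinct reals λ_1,…,λ_n with λ_j > −1/2, and
a_{j,n} = (∏_i (λ_i + λ_j + 1)) / (∏_{i≠j} (λ_i − λ_j)), the n×n matrix m_t with entries
(m_t)_{i,j} = t^{λ_i+λ_j+1}/(λ_i+λ_j+1) is invertible for t > 0, and its inverse α_t has
entries (α_t)_{i,j} = a_{i,n}·a_{j,n}·t^{−λ_i−λ_j−1}/(λ_i+λ_j+1). -/
theorem muntz_gramian_inverse
    (n : ℕ) (hn : 1 ≤ n)
    (L : Fin n → ℝ)
    (hL_inj : Function.Injective L)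
    (hL_half : ∀ j, -1/2 < L j)
    (a : Fin n → ℝ)
    (ha : ∀ j, a j = (∏ i, (L i + L j + 1)) / (∏ i ∈ Finset.univ.erase j, (L i - L j)))
    (t : ℝ) (ht : 0 < t)
    (m : Matrix (Fin n) (Fin n) ℝ)
    (hm : m = Matrix.of fun i j => t ^ (L i + L j + 1) / (L i + L j + 1)) :
    IsUnit m ∧
    m⁻¹ = Matrix.of fun i j => a i * a j * t ^ (-(L i) - L j - 1) / (L i + L j + 1) :=
  muntz_gramian_inverse_general n L hL_inj hL_half a ha t ht m hm
end

section
/- Let b(s) = s^{−1}·e^{−1/s} for s > 0. Then ∫_0^s b(r)² dr = e^{−2/s}/2 for every s > 0, the integrand b(s)/(∫_0^s b(r)² dr)^{1/2} equals √2/s, and consequently ∫_0^t b(s)·(∫_0^s b(r)² dr)^{−1/2} ds = ∞ for every t > 0; in particular the associated order-one Goursat kernel k(u,v) = b(u)·b(v)/∫_0^u b(r)² dr fails the square-integrability condition ∫_0^t (∫_0^u k(u,v)² dv)^{1/2} du < ∞. -/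
/-!
For `b s = s⁻¹ e^{-1/s}` one has `b² = d/ds (e^{-2/s}/2)`, and `e^{-2/s}/2` extends continuously by
`0` at `s = 0`, so `∫₀ˢ b² = e^{-2/s}/2`. Then `b s / (∫₀ˢ b²)^{1/2} = √2 / s`, which is not
integrable at `0`. For any Goursat kernel `k u v = b u b v / ∫₀ᵘ b²` the inner integral
`∫₀ᵘ k(u,v)² dv` is `b(u)² / ∫₀ᵘ b²`, so the square-integrability condition reduces to the same
non-integrable function.
-/

open MeasureTheory Topology Set Real

lemma sqrt_integral_sq_goursat_kernel (b : ℝ → ℝ) (k : ℝ → ℝ → ℝ) (u : ℝ)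
    (hk : ∀ v, 0 < v → v ≤ u → k u v = b u * b v / ∫ r in Ioc 0 u, b r ^ 2) :
    √(∫ v in Ioc 0 u, k u v ^ 2) = |b u| / √(∫ r in Ioc 0 u, b r ^ 2) := by
  set B := ∫ r in Ioc 0 u, b r ^ 2
  have hB : 0 ≤ B := setIntegral_nonneg measurableSet_Ioc fun r _ => sq_nonneg (b r)
  have hint : ∫ v in Ioc 0 u, k u v ^ 2 = b u ^ 2 / B := by
    calc ∫ v in Ioc 0 u, k u v ^ 2 = ∫ v in Ioc 0 u, (b u / B) ^ 2 * b v ^ 2 :=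
          setIntegral_congr_fun measurableSet_Ioc fun v hv => by
            rw [hk v hv.1 hv.2]; ring
      _ = b u ^ 2 / B := by
          rw [integral_const_mul]; change (b u / B) ^ 2 * B = _
          rcases hB.eq_or_lt with hB0 | hBpos
          · simp [← hB0]
          · field_simp
  rw [hint, sqrt_div' _ hB, sqrt_sq_eq_abs]

lemma not_integrableOn_Ioc_zero_const_div {c t : ℝ} (hc : c ≠ 0) (ht : 0 < t) :
    ¬ IntegrableOn (fun s => c / s) (Ioc 0 t) := by
  simp_rw [div_eq_mul_inv]
  rw [IntegrableOn, integrable_const_mul_iff hc.isUnit, ← IntegrableOn,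
    ← intervalIntegrable_iff_integrableOn_Ioc_of_le ht.le, intervalIntegrable_inv_iff]
  simp [ht.ne, ht.le]

lemma hasDerivAt_expNegInvGlue_half_div_two {r : ℝ} (hr : 0 < r) :
    HasDerivAt (fun x => expNegInvGlue (x / 2) / 2) ((r⁻¹ * exp (-(1 / r))) ^ 2) r := by
  have hglue : (fun x => exp (-2 * x⁻¹) / 2) =ᶠ[𝓝 r] fun x => expNegInvGlue (x / 2) / 2 := by
    filter_upwards [Ioi_mem_nhds hr] with x hx
    simp [expNegInvGlue, mem_Ioi.mp hx, div_eq_mul_inv]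
  have hexp : HasDerivAt (fun x => exp (-2 * x⁻¹) / 2)
      (exp (-2 * r⁻¹) * (-2 * -(r ^ 2)⁻¹) / 2) r :=
    ((hasDerivAt_inv hr.ne').const_mul (-2)).exp.div_const 2
  refine (hexp.congr_of_eventuallyEq hglue.symm).congr_deriv ?_
  rw [mul_pow, ← exp_nat_mul]
  field_simp
  ring_nf

lemma integral_Ioc_sq_inv_mul_exp_neg_inv {s : ℝ} (hs : 0 < s) :
    ∫ r in Ioc 0 s, (r⁻¹ * exp (-(1 / r))) ^ 2 = exp (-(2 / s)) / 2 := by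
  have hcont : ContinuousOn (fun x => expNegInvGlue (x / 2) / 2) (Icc 0 s) :=
    ((expNegInvGlue.contDiff (n := 0)).continuous.comp (continuous_id.div_const 2)).div_const 2
      |>.continuousOn
  have hderiv : ∀ x ∈ Ioo 0 s, HasDerivAt (fun x => expNegInvGlue (x / 2) / 2)
      ((x⁻¹ * exp (-(1 / x))) ^ 2) x := fun x hx => hasDerivAt_expNegInvGlue_half_div_two hx.1
  have hint := intervalIntegral.intervalIntegrable_deriv_of_nonneg (uIcc_of_le hs.le ▸ hcont)
    (by rwa [min_eq_left hs.le, max_eq_right hs.le]) fun x _ => sq_nonneg _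
  rw [← intervalIntegral.integral_of_le hs.le,
    intervalIntegral.integral_eq_sub_of_hasDerivAt_of_le hs.le hcont hderiv hint]
  simp [expNegInvGlue, not_le.mpr (half_pos hs), inv_div]

lemma inv_mul_exp_neg_inv_div_sqrt {s : ℝ} (hs : 0 < s) :
    s⁻¹ * exp (-(1 / s)) / √(exp (-(2 / s)) / 2) = √2 / s := by
  have hsq : exp (-(2 / s)) = exp (-(1 / s)) ^ 2 := by
    rw [← exp_nat_mul]; ring_nf
  rw [hsq, sqrt_div' _ zero_le_two, sqrt_sq (exp_pos _).le]
  field_simp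

/-- Let b(s) = s⁻¹·e^{−1/s} for s > 0. Then ∫_0^s b(r)² dr = e^{−2/s}/2 for every s > 0,
the integrand b(s)/(∫_0^s b(r)² dr)^{1/2} equals √2/s, hence
∫_0^t b(s)·(∫_0^s b(r)² dr)^{−1/2} ds = ∞ for every t > 0; in particular the associated
order-one Goursat kernel k(u,v) = b(u)·b(v)/∫_0^u b(r)² dr fails the square-integrability
condition ∫_0^t (∫_0^u k(u,v)² dv)^{1/2} du < ∞. -/
theorem levy_example_fails_square_integrability
    (b : ℝ → ℝ)
    (hb : ∀ s > (0 : ℝ), b s = s⁻¹ * Real.exp (-(1 / s)))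
    (k : ℝ → ℝ → ℝ)
    (hk : ∀ v u : ℝ, 0 < v → v ≤ u →
      k u v = b u * b v / ∫ r in Set.Ioc 0 u, (b r) ^ 2) :
    (∀ s > (0 : ℝ), (∫ r in Set.Ioc 0 s, (b r) ^ 2) = Real.exp (-(2 / s)) / 2) ∧
    (∀ s > (0 : ℝ),
      b s / Real.sqrt (∫ r in Set.Ioc 0 s, (b r) ^ 2) = Real.sqrt 2 / s) ∧
    (∀ t > (0 : ℝ),
      ¬ IntegrableOn
        (fun s => b s / Real.sqrt (∫ r in Set.Ioc 0 s, (b r) ^ 2)) (Set.Ioc 0 t)) ∧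
    (∀ t > (0 : ℝ),
      ¬ IntegrableOn
        (fun u => Real.sqrt (∫ v in Set.Ioc 0 u, (k u v) ^ 2)) (Set.Ioc 0 t)) := by
  have hB : ∀ s > (0 : ℝ), ∫ r in Ioc 0 s, b r ^ 2 = exp (-(2 / s)) / 2 := fun s hs => by
    rw [setIntegral_congr_fun (g := fun r => (r⁻¹ * exp (-(1 / r))) ^ 2) measurableSet_Ioc
        fun r hr => by rw [hb r hr.1],
      integral_Ioc_sq_inv_mul_exp_neg_inv hs]
  have hratio : ∀ s > (0 : ℝ), b s / √(∫ r in Ioc 0 s, b r ^ 2) = √2 / s := fun s hs => by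
    rw [hB s hs, hb s hs, inv_mul_exp_neg_inv_div_sqrt hs]
  have hdiv : ∀ t > (0 : ℝ), ¬ IntegrableOn (fun s => √2 / s) (Ioc 0 t) := fun t ht =>
    not_integrableOn_Ioc_zero_const_div (sqrt_pos.mpr two_pos).ne' ht
  refine ⟨hB, hratio, fun t ht h => hdiv t ht ?_, fun t ht h => hdiv t ht ?_⟩
  · exact h.congr_fun (fun s hs => hratio s hs.1) measurableSet_Ioc
  · refine h.congr_fun (fun u hu => ?_) measurableSet_Ioc
    have hbu : 0 < b u := hb u hu.1 ▸ mul_pos (inv_pos.mpr hu.1) (exp_pos _)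
    dsimp only
    rw [sqrt_integral_sq_goursat_kernel b k u fun v => hk v u, abs_of_pos hbu, hratio u hu.1]
end
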